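/- arXiv:0709.4243 — 7 statements merged into one kernel-verified Lean document; each statement's English description precedes it below -/
import Mathlib

section
/- For every real θ ≥ 1 and every k ∈ ℕ with k ≥ 1, ∫₀^π (1 - cos(θ t))^k sin t dt ≥ 2^{k+1}/(k+1). -/
open intervalIntegral Real

/-!
Since `1 - cos y = -(e^{iy/2} - e^{-iy/2})² / 2`, the binomial theorem writes `(1 - cos y)^k` as
`2^{-k} ∑ⱼ C(2k, j) (-1)^{j+k} cos((j - k) y)`, so the integral is the same combination of
`I(a) = ∫₀^π cos(a t) sin t dt = -(1 + cos aπ) / (a² - 1)` at `a = (j - k) θ`. Compare with `θ = 1`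
term by term, with `n = |j - k|`: for odd `n`, `I(n) = 0 ≥ I(nθ)`; for even `n ≥ 2`,
`I(n) = -2 / (n² - 1) ≤ -2 / (n²θ² - 1) ≤ I(nθ)`.
-/

theorem one_sub_cos_pow_eq_sum (k : ℕ) (y : ℝ) :
    (1 - cos y) ^ k =
      (∑ j ∈ Finset.range (2 * k + 1),
        (2 * k).choose j * ((-1) ^ (j + k) * cos (((j : ℝ) - k) * y))) / 2 ^ k := by
  set w := Complex.exp (y / 2 * Complex.I)
  have hw : w ≠ 0 := Complex.exp_ne_zero _
  have half_angle : ((1 - cos y : ℝ) : ℂ) = -(w - w⁻¹) ^ 2 / 2 := by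
    have : Complex.exp (y * Complex.I) = w ^ 2 := by
      rw [← Complex.exp_nat_mul]; congr 1; push_cast; ring
    rw [Complex.ofReal_sub, Complex.ofReal_one, Complex.ofReal_cos, Complex.cos, neg_mul,
      Complex.exp_neg, this]
    field_simp
    ring
  have monomial (j : ℕ) (hj : j ≤ 2 * k) :
      w ^ j * w⁻¹ ^ (2 * k - j) = Complex.exp (((((j : ℝ) - k) * y : ℝ)) * Complex.I) := by
    rw [← Complex.exp_neg, ← Complex.exp_nat_mul, ← Complex.exp_nat_mul, ← Complex.exp_add]
    congr 1
    push_cast [Nat.cast_sub hj]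
    ring
  have key : ((1 - cos y : ℝ) : ℂ) ^ k = ∑ j ∈ Finset.range (2 * k + 1),
      (((2 * k).choose j * (-1) ^ (j + k) / 2 ^ k : ℝ) : ℂ) *
        Complex.exp ((((j : ℝ) - k) * y : ℝ) * Complex.I) := by
    rw [half_angle, div_pow, neg_pow, ← pow_mul, sub_pow, Finset.mul_sum, Finset.sum_div]
    refine Finset.sum_congr rfl fun j hj => ?_
    rw [← monomial j (by simpa [Nat.lt_succ_iff] using hj)]
    push_cast
    rw [pow_add, pow_mul, neg_one_sq, one_pow, pow_add]
    ring
  have := congrArg Complex.re key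
  rw [← Complex.ofReal_pow, Complex.ofReal_re, Complex.re_sum] at this
  rw [this, Finset.sum_div]
  refine Finset.sum_congr rfl fun j _ => ?_
  rw [Complex.re_ofReal_mul, Complex.exp_ofReal_mul_I_re]
  ring

-- Also true at `b = 0`, where both sides are `0`.
theorem integral_sin_const_mul (b : ℝ) :
    ∫ t in (0 : ℝ)..π, sin (b * t) = (1 - cos (b * π)) / b := by
  rcases eq_or_ne b 0 with rfl | hb
  · simp
  · rw [integral_comp_mul_left _ hb, integral_sin, mul_zero, cos_zero, smul_eq_mul, inv_mul_eq_div]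

noncomputable def cosMulSinIntegral (a : ℝ) : ℝ := ∫ t in (0 : ℝ)..π, cos (a * t) * sin t

theorem cosMulSinIntegral_neg (a : ℝ) : cosMulSinIntegral (-a) = cosMulSinIntegral a := by
  simp only [cosMulSinIntegral, neg_mul, cos_neg]

theorem cosMulSinIntegral_one : cosMulSinIntegral 1 = 0 := by
  simp only [cosMulSinIntegral, one_mul, mul_comm (cos _), integral_sin_mul_cos₁, sin_pi, sin_zero]
  norm_num

theorem cosMulSinIntegral_eq {a : ℝ} (ha : a ^ 2 ≠ 1) :
    cosMulSinIntegral a = -(1 + cos (a * π)) / (a ^ 2 - 1) := by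
  have hp : a + 1 ≠ 0 := fun h => ha (by rw [eq_neg_of_add_eq_zero_left h]; norm_num)
  have hm : a - 1 ≠ 0 := fun h => ha (by rw [sub_eq_zero.mp h]; norm_num)
  have product_to_sum (t : ℝ) :
      cos (a * t) * sin t = (sin ((a + 1) * t) - sin ((a - 1) * t)) / 2 := by
    rw [add_mul, sub_mul, one_mul, sin_add, sin_sub]; ring
  have hint (b : ℝ) : IntervalIntegrable (fun t => sin (b * t)) MeasureTheory.volume 0 π := by
    apply Continuous.intervalIntegrable; fun_prop
  simp only [cosMulSinIntegral, product_to_sum]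
  rw [integral_div, integral_sub (hint _) (hint _), integral_sin_const_mul, integral_sin_const_mul,
    add_mul, sub_mul, one_mul, cos_add_pi, cos_sub_pi]
  field_simp
  ring

-- At `n = 1` both sides vanish, the right one through `x / 0 = 0`.
theorem cosMulSinIntegral_natCast (n : ℕ) :
    cosMulSinIntegral n = -(1 + (-1) ^ n) / ((n : ℝ) ^ 2 - 1) := by
  rcases eq_or_ne n 1 with rfl | hn
  · simp [cosMulSinIntegral_one]
  · rw [cosMulSinIntegral_eq, cos_nat_mul_pi]
    exact_mod_cast (Nat.pow_left_injective two_ne_zero).ne hn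

theorem cosMulSinIntegral_nonpos {a : ℝ} (ha : 1 ≤ a) : cosMulSinIntegral a ≤ 0 := by
  rcases ha.eq_or_lt with rfl | ha
  · exact cosMulSinIntegral_one.le
  · have : 0 < a ^ 2 - 1 := by nlinarith
    rw [cosMulSinIntegral_eq (sub_pos.mp this).ne']
    exact div_nonpos_of_nonpos_of_nonneg (by linarith [neg_one_le_cos (a * π)]) this.le

theorem neg_two_div_le_cosMulSinIntegral {a : ℝ} (ha : 1 < a) :
    -2 / (a ^ 2 - 1) ≤ cosMulSinIntegral a := by
  have : 0 < a ^ 2 - 1 := by nlinarith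
  rw [cosMulSinIntegral_eq (sub_pos.mp this).ne']
  exact div_le_div_of_nonneg_right (by linarith [cos_le_one (a * π)]) this.le

theorem neg_one_pow_mul_cosMulSinIntegral_natCast_le {θ : ℝ} (hθ : 1 ≤ θ) (n : ℕ) :
    (-1) ^ n * cosMulSinIntegral n ≤ (-1) ^ n * cosMulSinIntegral (n * θ) := by
  rcases n.even_or_odd with hn | hn
  · rcases eq_or_ne n 0 with rfl | hn0
    · simp
    have hn2 : (1 : ℝ) < n := by
      obtain ⟨m, rfl⟩ := hn
      exact_mod_cast (by omega : 1 < m + m)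
    have hnθ : (n : ℝ) ≤ n * θ := le_mul_of_one_le_right (by positivity) hθ
    rw [hn.neg_one_pow, one_mul, one_mul, cosMulSinIntegral_natCast, hn.neg_one_pow]
    calc -(1 + 1) / ((n : ℝ) ^ 2 - 1) = -2 / ((n : ℝ) ^ 2 - 1) := by norm_num
      _ ≤ -2 / ((n * θ) ^ 2 - 1) := by
        rw [neg_div, neg_div, neg_le_neg_iff]
        gcongr
        nlinarith
      _ ≤ cosMulSinIntegral (n * θ) := neg_two_div_le_cosMulSinIntegral (by linarith)
  · have hn1 : (1 : ℝ) ≤ n := by exact_mod_cast hn.pos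
    rw [hn.neg_one_pow, cosMulSinIntegral_natCast, hn.neg_one_pow, neg_one_mul, neg_one_mul,
      neg_le_neg_iff]
    simpa using cosMulSinIntegral_nonpos (one_le_mul_of_one_le_of_one_le hn1 hθ)

theorem neg_one_pow_mul_cosMulSinIntegral_sub_le {θ : ℝ} (hθ : 1 ≤ θ) (j k : ℕ) :
    (-1) ^ (j + k) * cosMulSinIntegral ((j : ℝ) - k) ≤
      (-1) ^ (j + k) * cosMulSinIntegral (((j : ℝ) - k) * θ) := by
  rcases le_total j k with h | h
  · obtain ⟨m, rfl⟩ := Nat.exists_eq_add_of_le h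
    have : (-1 : ℝ) ^ (j + (j + m)) = (-1) ^ m := by
      rw [show j + (j + m) = m + 2 * j by ring, pow_add, pow_mul, neg_one_sq, one_pow, mul_one]
    simpa [this, neg_mul, cosMulSinIntegral_neg] using
      neg_one_pow_mul_cosMulSinIntegral_natCast_le hθ m
  · obtain ⟨m, rfl⟩ := Nat.exists_eq_add_of_le h
    have : (-1 : ℝ) ^ (k + m + k) = (-1) ^ m := by
      rw [show k + m + k = m + 2 * k by ring, pow_add, pow_mul, neg_one_sq, one_pow, mul_one]
    simpa [this] using neg_one_pow_mul_cosMulSinIntegral_natCast_le hθ m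

theorem integral_one_sub_cos_mul_pow_mul_sin_eq_sum (θ : ℝ) (k : ℕ) :
    ∫ t in (0 : ℝ)..π, (1 - cos (θ * t)) ^ k * sin t =
      (∑ j ∈ Finset.range (2 * k + 1),
        (2 * k).choose j * ((-1) ^ (j + k) * cosMulSinIntegral (((j : ℝ) - k) * θ))) / 2 ^ k := by
  have hint (a : ℝ) :
      IntervalIntegrable (fun t => cos (a * t) * sin t) MeasureTheory.volume 0 π := by
    apply Continuous.intervalIntegrable; fun_prop
  simp_rw [one_sub_cos_pow_eq_sum, div_mul_eq_mul_div, Finset.sum_mul, mul_assoc, ← mul_assoc _ θ]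
  rw [integral_div, integral_finsetSum fun j _ => ((hint _).const_mul _).const_mul _]
  simp only [integral_const_mul, cosMulSinIntegral]

theorem integral_one_sub_cos_pow_mul_sin (k : ℕ) :
    ∫ t in (0 : ℝ)..π, (1 - cos t) ^ k * sin t = 2 ^ (k + 1) / (k + 1) := by
  have hderiv (t : ℝ) : HasDerivAt (fun u => (1 - cos u) ^ (k + 1) / (k + 1))
      ((1 - cos t) ^ k * sin t) t := by
    refine ((((hasDerivAt_cos t).const_sub 1).fun_pow (k + 1)).div_const _).congr_deriv ?_
    rw [Nat.add_sub_cancel, neg_neg, Nat.cast_succ]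
    field
  rw [integral_eq_sub_of_hasDerivAt (fun t _ => hderiv t)
    (by apply Continuous.intervalIntegrable; fun_prop), cos_pi, cos_zero]
  norm_num

theorem integral_one_sub_cos_pow_mul_sin_ge_general (θ : ℝ) (hθ : 1 ≤ θ) (k : ℕ) :
    (2 : ℝ) ^ (k + 1) / (k + 1) ≤ ∫ t in (0 : ℝ)..π, (1 - Real.cos (θ * t)) ^ k * Real.sin t := by
  have at_one := integral_one_sub_cos_mul_pow_mul_sin_eq_sum 1 k
  simp only [one_mul, mul_one, integral_one_sub_cos_pow_mul_sin] at at_one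
  rw [at_one, integral_one_sub_cos_mul_pow_mul_sin_eq_sum]
  gcongr (∑ j ∈ _, _ * ?_) / _ with j
  exact neg_one_pow_mul_cosMulSinIntegral_sub_le hθ j k

/-- For every real `θ ≥ 1` and every `k ∈ ℕ`, `k ≥ 1`:
`∫₀^π (1 - cos(θ t))^k sin t dt ≥ 2^{k+1}/(k+1)`. -/
theorem integral_one_sub_cos_pow_mul_sin_ge (θ : ℝ) (hθ : 1 ≤ θ) (k : ℕ) (hk : 1 ≤ k) :
    (2 : ℝ) ^ (k + 1) / (k + 1) ≤ ∫ t in (0 : ℝ)..π, (1 - Real.cos (θ * t)) ^ k * Real.sin t :=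
  integral_one_sub_cos_pow_mul_sin_ge_general θ hθ k
end

section
/- Let B be a self-adjoint operator on a Hilbert space H with spectral measure E, m > 0, and x ∈ D(|B|^m). Then for every k ≥ 1 and r > 0, ‖x - E([-r,r])x‖ ≤ (√(k+1) / (2^k r^m)) · sup_{0<τ≤π/r} ‖(e^{iτB} - I)^k |B|^m x‖. -/
/-!
Averaged against the probability density `(r/2) sin (r τ)` on `(0, π/r]`, the symbol
`|e^{iτλ} - 1|^{2k} = (2 - 2 cos τλ)^k` is at least `4^k/(k+1)`, its average at `|λ| = r`,
whenever `|λ| > r`. Indeed, expanding `(2 - 2 cos t)^k = |Σ_a (-1)^a C(k,a) e^{iat}|²` into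
cosines, the mode `j = a - b` contributes `(-1)^j (1 + cos jyπ)/(1 - j²y²)` with `y = |λ|/r`, and
each such term is smallest at `y = 1` (it vanishes there for odd `j`, and is `2/(1 - j²)` for even
`j`). Integrating this bound against the spectral measure of `|B|^m x` and exchanging the two
integrals bounds `(4^k/(k+1)) r^{2m} ‖x - E([-r,r])x‖²` by the largest
`‖(e^{iτB} - I)^k |B|^m x‖²`.
-/

open MeasureTheory Complex Set Real
open scoped ENNReal

open Finset in
theorem two_sub_two_mul_cos_pow (k : ℕ) (t : ℝ) :
    (2 - 2 * Real.cos t) ^ k = ∑ a ∈ range (k + 1), ∑ b ∈ range (k + 1),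
      (k.choose a * k.choose b * (-1) ^ (a + b) : ℝ) * Real.cos ((a - b : ℝ) * t) := by
  have one_sub_exp_pow : ∀ t : ℝ, (1 - Complex.exp (t * I)) ^ k = ∑ a ∈ range (k + 1),
      ((k.choose a * (-1) ^ a : ℝ) : ℂ) * Complex.exp ((a * t : ℝ) * I) := by
    intro t
    rw [sub_eq_neg_add, add_pow]
    refine sum_congr rfl fun a _ => ?_
    rw [neg_pow, ← Complex.exp_nat_mul]
    push_cast
    ring_nf
  have hfactor : ((2 - 2 * Real.cos t : ℝ) : ℂ)
      = (1 - Complex.exp (t * I)) * (1 - Complex.exp ((-t : ℝ) * I)) := by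
    push_cast
    rw [Complex.cos.eq_1]
    ring_nf
    rw [← Complex.exp_add]
    simp
    ring
  have hre := congrArg (fun z : ℂ => (z ^ k).re) hfactor
  simp only [← Complex.ofReal_pow, Complex.ofReal_re] at hre
  rw [hre, mul_pow, one_sub_exp_pow, one_sub_exp_pow, sum_mul_sum, Complex.re_sum]
  refine sum_congr rfl fun a _ => ?_
  rw [Complex.re_sum]
  refine sum_congr rfl fun b _ => ?_
  rw [mul_mul_mul_comm, ← Complex.exp_add, ← add_mul, ← Complex.ofReal_mul, ← Complex.ofReal_add,
    Complex.re_ofReal_mul, Complex.exp_ofReal_mul_I_re, pow_add]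
  ring_nf

-- At `β = ±1` both sides vanish, the right one because `x / 0 = 0`.
theorem integral_cos_mul_mul_sin (β : ℝ) :
    ∫ θ in (0:ℝ)..π, Real.cos (β * θ) * Real.sin θ
      = (1 + Real.cos (β * π)) / (1 - β ^ 2) := by
  by_cases hβ : β = 1 ∨ β = -1
  · have hcos : ∀ θ, Real.cos (β * θ) = Real.cos θ := by
      rcases hβ with rfl | rfl <;> simp
    simp only [hcos, Real.cos_pi, add_neg_cancel, zero_div, mul_comm (Real.cos _),
      integral_sin_mul_cos₁, Real.sin_pi, Real.sin_zero]
    ring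
  push Not at hβ
  have h₁ : 1 + β ≠ 0 := fun h => hβ.2 (by linarith)
  have h₂ : 1 - β ≠ 0 := fun h => hβ.1 (by linarith)
  have hderiv : ∀ θ ∈ uIcc 0 π, HasDerivAt
      (fun θ => -(Real.cos ((1 + β) * θ) / (1 + β) + Real.cos ((1 - β) * θ) / (1 - β)) / 2)
      (Real.cos (β * θ) * Real.sin θ) θ := by
    intro θ _
    have c₁ := ((hasDerivAt_id θ).const_mul (1 + β)).cos.div_const (1 + β)
    have c₂ := ((hasDerivAt_id θ).const_mul (1 - β)).cos.div_const (1 - β)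
    refine (((c₁.add c₂).neg).div_const 2).congr_deriv ?_
    simp only [id, mul_one]
    rw [show (1 + β) * θ = θ + β * θ by ring, show (1 - β) * θ = θ - β * θ by ring,
      Real.sin_add, Real.sin_sub]
    field_simp
    ring
  rw [intervalIntegral.integral_eq_sub_of_hasDerivAt hderiv
    (Continuous.intervalIntegrable (by fun_prop) _ _)]
  rw [show (1 + β) * π = β * π + π by ring, show (1 - β) * π = π - β * π by ring,
    Real.cos_add_pi, Real.cos_pi_sub, show 1 - β ^ 2 = (1 + β) * (1 - β) by ring]
  field_simp
  simp
  ring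

theorem neg_one_zpow_mul_integral_cos_mul_mul_sin_le (j : ℤ) {y : ℝ} (hy : 1 ≤ y) :
    (-1 : ℝ) ^ j * ∫ θ in (0:ℝ)..π, Real.cos (j * θ) * Real.sin θ
      ≤ (-1) ^ j * ∫ θ in (0:ℝ)..π, Real.cos (j * y * θ) * Real.sin θ := by
  rw [integral_cos_mul_mul_sin, integral_cos_mul_mul_sin, Real.cos_int_mul_pi]
  have hc := Real.neg_one_le_cos (j * y * π)
  have hc' := Real.cos_le_one (j * y * π)
  rcases eq_or_ne j 0 with rfl | hj
  · simp
  have hjy : (j:ℝ) ^ 2 ≤ (j * y) ^ 2 := by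
    rw [mul_pow]; nlinarith [sq_nonneg (j:ℝ), one_le_pow₀ (n := 2) hy]
  rcases Int.even_or_odd j with ⟨c, rfl⟩ | hodd
  · rw [Even.neg_one_zpow ⟨c, rfl⟩, one_mul, one_mul]
    have hc1 : (1:ℝ) ≤ (c:ℝ) ^ 2 := by
      have : c ≠ 0 := by rintro rfl; simp at hj
      exact_mod_cast (by nlinarith [Int.one_le_abs this, sq_abs c] : (1:ℤ) ≤ c ^ 2)
    have hneg : 1 - ((c + c : ℤ) : ℝ) ^ 2 < 0 := by push_cast; nlinarith
    calc (1 + 1) / (1 - ((c + c : ℤ) : ℝ) ^ 2) ≤ 2 / (1 - ((c + c : ℤ) * y) ^ 2) := by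
          rw [div_eq_mul_inv, div_eq_mul_inv, one_add_one_eq_two]
          gcongr 2 * ?_
          exact (inv_le_inv_of_neg hneg (by linarith)).2 (by linarith)
      _ ≤ _ := div_le_div_of_nonpos_of_le (by linarith) (by linarith)
  · have hj1 : (1:ℝ) ≤ (j:ℝ) ^ 2 := by
      exact_mod_cast (by nlinarith [Int.one_le_abs hj, sq_abs j] : (1:ℤ) ≤ j ^ 2)
    rw [hodd.neg_one_zpow]
    simp only [add_neg_cancel, zero_div, mul_zero, neg_one_mul, neg_nonneg]
    exact div_nonpos_of_nonneg_of_nonpos (by linarith) (by linarith)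

noncomputable def cosPowSinIntegral (k : ℕ) (y : ℝ) : ℝ :=
  ∫ θ in (0:ℝ)..π, (2 - 2 * Real.cos (y * θ)) ^ k * Real.sin θ

open Finset in
theorem cosPowSinIntegral_eq_sum (k : ℕ) (y : ℝ) :
    cosPowSinIntegral k y = ∑ a ∈ range (k + 1), ∑ b ∈ range (k + 1),
      (k.choose a * k.choose b * (-1) ^ (a + b) : ℝ) *
        ∫ θ in (0:ℝ)..π, Real.cos ((a - b : ℝ) * y * θ) * Real.sin θ := by
  simp only [cosPowSinIntegral, two_sub_two_mul_cos_pow, sum_mul, mul_assoc]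
  rw [intervalIntegral.integral_finsetSum fun a _ => ?_]
  · refine sum_congr rfl fun a _ => ?_
    rw [intervalIntegral.integral_finsetSum fun b _ => ?_]
    · simp only [intervalIntegral.integral_const_mul]
    · exact Continuous.intervalIntegrable (by fun_prop) _ _
  · exact Continuous.intervalIntegrable (by fun_prop) _ _

theorem cosPowSinIntegral_one (k : ℕ) : cosPowSinIntegral k 1 = 2 * 4 ^ k / (k + 1) := by
  have hderiv : ∀ θ ∈ uIcc 0 π,
      HasDerivAt (fun θ => (2 - 2 * Real.cos θ) ^ (k + 1) / (2 * (k + 1)))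
        ((2 - 2 * Real.cos (1 * θ)) ^ k * Real.sin θ) θ := by
    intro θ _
    refine ((((Real.hasDerivAt_cos θ).const_mul 2).const_sub 2).pow (k + 1)).div_const _
      |>.congr_deriv ?_
    push_cast
    field_simp
  rw [cosPowSinIntegral, intervalIntegral.integral_eq_sub_of_hasDerivAt hderiv
    (Continuous.intervalIntegrable (by fun_prop) _ _), Real.cos_pi, Real.cos_zero]
  field_simp
  ring

theorem cosPowSinIntegral_abs (k : ℕ) (y : ℝ) :
    cosPowSinIntegral k |y| = cosPowSinIntegral k y := by
  rcases abs_cases y with ⟨h, _⟩ | ⟨h, _⟩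
  · rw [h]
  · simp only [cosPowSinIntegral, h, neg_mul, Real.cos_neg]

theorem cosPowSinIntegral_one_le (k : ℕ) {y : ℝ} (hy : 1 ≤ |y|) :
    cosPowSinIntegral k 1 ≤ cosPowSinIntegral k y := by
  rw [← cosPowSinIntegral_abs k y, cosPowSinIntegral_eq_sum, cosPowSinIntegral_eq_sum]
  refine Finset.sum_le_sum fun a _ => Finset.sum_le_sum fun b _ => ?_
  have hsign : (-1 : ℝ) ^ (a + b) = (-1) ^ ((a : ℤ) - b) := by
    rw [zpow_sub₀ (by norm_num), zpow_natCast, zpow_natCast, div_eq_mul_inv, ← inv_pow,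
      inv_neg_one, pow_add]
  have := neg_one_zpow_mul_integral_cos_mul_mul_sin_le ((a : ℤ) - b) hy
  push_cast at this
  simp only [mul_one, hsign, mul_assoc _ ((-1 : ℝ) ^ ((a : ℤ) - b))]
  exact mul_le_mul_of_nonneg_left this (by positivity)

noncomputable def sineKernel (r : ℝ) : Measure ℝ :=
  (volume.restrict (Ioc 0 (π / r))).withDensity fun τ => ENNReal.ofReal (r / 2 * Real.sin (r * τ))

section sineKernel

variable {r : ℝ}

theorem ae_mem_Ioc_sineKernel : ∀ᵐ τ ∂sineKernel r, τ ∈ Ioc 0 (π / r) :=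
  (withDensity_absolutelyContinuous _ _).ae_le (ae_restrict_mem measurableSet_Ioc)

theorem lintegral_ofReal_sineKernel (hr : 0 < r) {f : ℝ → ℝ} (hf : Continuous f) (hf₀ : 0 ≤ f) :
    ∫⁻ τ, ENNReal.ofReal (f τ) ∂sineKernel r
      = ENNReal.ofReal (∫ τ in (0:ℝ)..π / r, r / 2 * Real.sin (r * τ) * f τ) := by
  have hw : ∀ τ ∈ Ioc 0 (π / r), 0 ≤ r / 2 * Real.sin (r * τ) := fun τ hτ =>
    mul_nonneg (by positivity) (Real.sin_nonneg_of_nonneg_of_le_pi (by nlinarith [hτ.1])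
      (by rw [← le_div_iff₀' hr]; exact hτ.2))
  rw [sineKernel, lintegral_withDensity_eq_lintegral_mul _ (by fun_prop) (by fun_prop),
    intervalIntegral.integral_of_le (by positivity),
    ofReal_integral_eq_lintegral_ofReal (Continuous.integrableOn_Ioc (by fun_prop))
      ((ae_restrict_iff' measurableSet_Ioc).2
        (ae_of_all _ fun τ hτ => mul_nonneg (hw τ hτ) (hf₀ τ)))]
  refine setLIntegral_congr_fun measurableSet_Ioc fun τ hτ => ?_
  rw [Pi.mul_apply, ENNReal.ofReal_mul (hw τ hτ)]

theorem sineKernel_univ (hr : 0 < r) : sineKernel r univ = 1 := by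
  have := lintegral_ofReal_sineKernel hr continuous_const (fun _ => zero_le_one' ℝ)
  simp only [ENNReal.ofReal_one, lintegral_one, mul_one] at this
  rw [this, intervalIntegral.integral_const_mul, intervalIntegral.integral_comp_mul_left _ hr.ne',
    integral_sin, mul_zero, mul_div_cancel₀ _ hr.ne', Real.cos_zero, Real.cos_pi, smul_eq_mul]
  field_simp
  norm_num

theorem ofReal_le_lintegral_sineKernel (k : ℕ) (hr : 0 < r) {ξ : ℝ} (hξ : r < |ξ|) :
    ENNReal.ofReal (4 ^ k / (k + 1))
      ≤ ∫⁻ τ, ENNReal.ofReal ((2 - 2 * Real.cos (τ * ξ)) ^ k) ∂sineKernel r := by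
  rw [lintegral_ofReal_sineKernel hr (f := fun τ => (2 - 2 * Real.cos (τ * ξ)) ^ k) (by fun_prop)
    (fun τ => pow_nonneg (by linarith [Real.cos_le_one (τ * ξ)]) k)]
  refine ENNReal.ofReal_le_ofReal ?_
  have hsubst : ∫ τ in (0:ℝ)..π / r, r / 2 * Real.sin (r * τ) * (2 - 2 * Real.cos (τ * ξ)) ^ k
      = cosPowSinIntegral k (ξ / r) / 2 := by
    have := intervalIntegral.smul_integral_comp_mul_left
      (fun θ => (2 - 2 * Real.cos (ξ / r * θ)) ^ k * Real.sin θ) r (a := 0) (b := π / r)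
    rw [mul_zero, mul_div_cancel₀ _ hr.ne', smul_eq_mul,
      ← intervalIntegral.integral_const_mul] at this
    rw [cosPowSinIntegral, ← this, ← intervalIntegral.integral_div]
    refine intervalIntegral.integral_congr fun τ _ => ?_
    rw [show ξ / r * (r * τ) = τ * ξ by field_simp]
    ring
  calc 4 ^ k / (k + 1 : ℝ) = cosPowSinIntegral k 1 / 2 := by rw [cosPowSinIntegral_one]; ring
    _ ≤ cosPowSinIntegral k (ξ / r) / 2 := by
        gcongr
        refine cosPowSinIntegral_one_le k ?_
        rw [abs_div, abs_of_pos hr, one_le_div hr]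
        exact hξ.le
    _ = _ := hsubst.symm

end sineKernel

theorem mul_measure_le_of_le_lintegral {α β : Type*} [MeasurableSpace α] [MeasurableSpace β]
    {ν : Measure α} [SFinite ν] {κ : Measure β} [IsProbabilityMeasure κ]
    {F : α → β → ℝ≥0∞} (hF : Measurable (Function.uncurry F)) {E : Set α} (hE : MeasurableSet E)
    {c M : ℝ≥0∞} (hc : ∀ a ∈ E, c ≤ ∫⁻ τ, F a τ ∂κ) (hM : ∀ᵐ τ ∂κ, ∫⁻ a, F a τ ∂ν ≤ M) :
    c * ν E ≤ M :=
  calc c * ν E = ∫⁻ a, E.indicator (fun _ => c) a ∂ν := (lintegral_indicator_const hE c).symm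
    _ ≤ ∫⁻ a, ∫⁻ τ, F a τ ∂κ ∂ν := lintegral_mono fun a => by
        by_cases ha : a ∈ E
        · simpa [ha] using hc a ha
        · simp [ha]
    _ = ∫⁻ τ, ∫⁻ a, F a τ ∂ν ∂κ := lintegral_lintegral_swap hF.aemeasurable
    _ ≤ ∫⁻ _, M ∂κ := lintegral_mono_ae hM
    _ = M := by simp

theorem norm_exp_I_mul_ofReal_sub_one_sq (θ : ℝ) :
    ‖Complex.exp (I * θ) - 1‖ ^ 2 = 2 - 2 * Real.cos θ := by
  rw [norm_exp_I_mul_ofReal_sub_one, Real.norm_eq_abs, sq_abs, mul_pow, Real.sin_sq_eq_half_sub,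
    mul_div_cancel₀ _ two_ne_zero]
  ring

theorem enorm_exp_I_mul_ofReal_sub_one_pow_sq (θ : ℝ) (k : ℕ) :
    ‖(Complex.exp (I * θ) - 1) ^ k‖ₑ ^ 2 = ENNReal.ofReal ((2 - 2 * Real.cos θ) ^ k) := by
  rw [enorm_pow, ← pow_mul, mul_comm k, pow_mul, ← ofReal_norm,
    ← ENNReal.ofReal_pow (norm_nonneg _), norm_exp_I_mul_ofReal_sub_one_sq,
    ENNReal.ofReal_pow (by linarith [Real.cos_le_one θ])]

theorem ofReal_mul_measure_lt_abs_le {X : Type*} [MeasurableSpace X] (ν : Measure X) [SFinite ν]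
    {b : X → ℝ} (hb : Measurable b) (k : ℕ) {r : ℝ} (hr : 0 < r) {M : ℝ≥0∞}
    (hM : ∀ τ ∈ Ioc 0 (π / r), ∫⁻ s, ‖(Complex.exp (I * τ * b s) - 1) ^ k‖ₑ ^ 2 ∂ν ≤ M) :
    ENNReal.ofReal (4 ^ k / (k + 1)) * ν {s | r < |b s|} ≤ M := by
  have : IsProbabilityMeasure (sineKernel r) := ⟨sineKernel_univ hr⟩
  refine mul_measure_le_of_le_lintegral (κ := sineKernel r) (by fun_prop)
    (measurableSet_lt measurable_const hb.abs) (fun s hs => ?_) (ae_mem_Ioc_sineKernel.mono hM)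
  simp only [← Complex.ofReal_mul, mul_assoc, enorm_exp_I_mul_ofReal_sub_one_pow_sq]
  exact ofReal_le_lintegral_sineKernel k hr hs

theorem eLpNorm_two_sq {α ε : Type*} [MeasurableSpace α] [ENorm ε] (μ : Measure α) (f : α → ε) :
    eLpNorm f 2 μ ^ 2 = ∫⁻ s, ‖f s‖ₑ ^ 2 ∂μ := by
  simpa using eLpNorm_nnreal_pow_eq_lintegral (μ := μ) (f := f) (p := 2) two_ne_zero

section withDensityEnormSq

variable {X : Type*} [MeasurableSpace X] {μ : Measure X} {g : X → ℂ}

theorem withDensity_enorm_sq_apply {E : Set X} (hE : MeasurableSet E) :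
    μ.withDensity (fun s => ‖g s‖ₑ ^ 2) E = eLpNorm (E.indicator g) 2 μ ^ 2 := by
  rw [withDensity_apply _ hE, eLpNorm_two_sq, ← lintegral_indicator hE]
  congr 1
  funext s
  by_cases hs : s ∈ E <;> simp [hs]

theorem lintegral_enorm_sq_withDensity_enorm_sq (hg : AEMeasurable g μ) {φ : X → ℂ}
    (hφ : Measurable φ) :
    ∫⁻ s, ‖φ s‖ₑ ^ 2 ∂μ.withDensity (fun s => ‖g s‖ₑ ^ 2)
      = eLpNorm (fun s => φ s * g s) 2 μ ^ 2 := by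
  rw [lintegral_withDensity_eq_lintegral_mul₀ (hg.enorm.pow_const 2) (by fun_prop), eLpNorm_two_sq]
  simp only [Pi.mul_apply, enorm_mul, mul_pow, mul_comm]

theorem isFiniteMeasure_withDensity_enorm_sq (hg : MemLp g 2 μ) :
    IsFiniteMeasure (μ.withDensity fun s => ‖g s‖ₑ ^ 2) :=
  isFiniteMeasure_withDensity <| by
    rw [← eLpNorm_two_sq]
    exact (ENNReal.pow_lt_top hg.eLpNorm_lt_top).ne

end withDensityEnormSq

theorem ofReal_rpow_mul_eLpNorm_le {X : Type*} [MeasurableSpace X] (μ : Measure X) (b : X → ℝ)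
    (x : X → ℂ) {m r : ℝ} (hm : 0 ≤ m) (hr : 0 ≤ r) :
    ENNReal.ofReal (r ^ m) * eLpNorm (fun s => if |b s| ≤ r then 0 else x s) 2 μ
      ≤ eLpNorm ({s | r < |b s|}.indicator fun s => (|b s| ^ m : ℝ) * x s) 2 μ := by
  rw [← Real.enorm_eq_ofReal (by positivity), ← eLpNorm_const_smul]
  refine eLpNorm_mono fun s => ?_
  by_cases hs : |b s| ≤ r
  · simp [hs, not_lt.2 hs]
  · have hsE : s ∈ {s | r < |b s|} := not_le.1 hs
    rw [Pi.smul_apply, if_neg hs, indicator_of_mem hsE, norm_smul, norm_mul, Complex.norm_real,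
      Real.norm_of_nonneg (by positivity), Real.norm_of_nonneg (by positivity)]
    gcongr
    exact hsE.le

theorem le_ofReal_sqrt_div_mul {N P S : ℝ≥0∞} (k : ℕ) {a : ℝ} (ha : 0 < a)
    (hN : ENNReal.ofReal a * N ≤ P) (hP : ENNReal.ofReal (4 ^ k / (k + 1)) * P ^ 2 ≤ S ^ 2) :
    N ≤ ENNReal.ofReal (Real.sqrt (k + 1) / (2 ^ k * a)) * S := by
  set D := ENNReal.ofReal (Real.sqrt (k + 1) / (2 ^ k * a))
  have hD : D ^ 2 * (ENNReal.ofReal (4 ^ k / (k + 1)) * ENNReal.ofReal a ^ 2) = 1 := by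
    rw [← ENNReal.ofReal_pow (by positivity), ← ENNReal.ofReal_pow ha.le,
      ← ENNReal.ofReal_mul (by positivity), ← ENNReal.ofReal_mul (by positivity), div_pow,
      Real.sq_sqrt (by positivity), mul_pow, ← pow_mul, mul_comm k, pow_mul]
    norm_num
    field_simp
  rw [← ENNReal.pow_le_pow_left_iff two_ne_zero, mul_pow]
  calc N ^ 2 = D ^ 2 * (ENNReal.ofReal (4 ^ k / (k + 1)) * (ENNReal.ofReal a * N) ^ 2) := by
        rw [mul_pow, ← mul_assoc _ (_ ^ 2), ← mul_assoc, hD, one_mul]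
    _ ≤ D ^ 2 * S ^ 2 := by gcongr; exact (by gcongr : _ ≤ _ * P ^ 2).trans hP

/-- By the spectral theorem `B` is multiplication by a real function `b` on some `L²(μ)`, so
`E([-r, r])` is multiplication by the indicator of `{|b| ≤ r}`. -/
theorem direct_theorem_power_general {X : Type*} [MeasurableSpace X] (μ : Measure X)
    (b : X → ℝ) (hb : Measurable b)
    (m : ℝ) (hm : 0 < m)
    (x : X → ℂ)
    (hdom : MemLp (fun s => (|b s| ^ m : ℝ) * x s) 2 μ)
    (k : ℕ) (r : ℝ) (hr : 0 < r) :
    eLpNorm (fun s => if |b s| ≤ r then 0 else x s) 2 μ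
      ≤ ENNReal.ofReal (Real.sqrt (k + 1) / (2 ^ k * r ^ m)) *
        ⨆ τ ∈ Ioc (0 : ℝ) (π / r),
          eLpNorm (fun s =>
            (Complex.exp (Complex.I * τ * b s) - 1) ^ k * ((|b s| ^ m : ℝ) * x s)) 2 μ := by
  set g : X → ℂ := fun s => (|b s| ^ m : ℝ) * x s
  -- the spectral measure of `|B|^m x`, pulled back along `b`
  set ρ := μ.withDensity fun s => ‖g s‖ₑ ^ 2
  have := isFiniteMeasure_withDensity_enorm_sq hdom
  have hmass := ofReal_mul_measure_lt_abs_le ρ hb k hr fun τ hτ => by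
    rw [lintegral_enorm_sq_withDensity_enorm_sq hdom.1.aemeasurable (by fun_prop)]
    exact pow_le_pow_left' (le_biSup (fun τ : ℝ =>
      eLpNorm (fun s => (Complex.exp (I * τ * b s) - 1) ^ k * g s) 2 μ) hτ) 2
  rw [withDensity_enorm_sq_apply (measurableSet_lt measurable_const hb.abs)] at hmass
  exact le_ofReal_sqrt_div_mul k (rpow_pos_of_pos hr m)
    (ofReal_rpow_mul_eLpNorm_le μ b x hm.le hr.le) hmass

/-- Corollary of the direct theorem for `G(λ) = |λ|^m`.  `B` is realized as multiplication
by the measurable function `b` on `L²(μ)`; `x ∈ D(|B|^m)` means that `|b|^m · x ∈ L²`.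
Then `‖x - E([-r,r])x‖ ≤ (√(k+1)/(2^k r^m)) · sup_{0<τ≤π/r} ‖(e^{iτB}-I)^k |B|^m x‖`. -/
theorem direct_theorem_power {X : Type*} [MeasurableSpace X] (μ : Measure X)
    (b : X → ℝ) (hb : Measurable b)
    (m : ℝ) (hm : 0 < m)
    (x : X → ℂ) (hx : MemLp x 2 μ)
    (hdom : MemLp (fun s => (|b s| ^ m : ℝ) * x s) 2 μ)
    (k : ℕ) (hk : 1 ≤ k) (r : ℝ) (hr : 0 < r) :
    eLpNorm (fun s => if |b s| ≤ r then 0 else x s) 2 μ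
      ≤ ENNReal.ofReal (Real.sqrt (k + 1) / (2 ^ k * r ^ m)) *
        ⨆ τ ∈ Ioc (0 : ℝ) (π / r),
          eLpNorm (fun s =>
            (Complex.exp (Complex.I * τ * b s) - 1) ^ k * ((|b s| ^ m : ℝ) * x s)) 2 μ :=
  direct_theorem_power_general μ b hb m hm x hdom k r hr
end

section
/- Let B be a self-adjoint operator on a Hilbert space H, and let ω : [0,∞) → [0,∞) be continuous, nondecreasing, with ω(0) = 0 and ω(2t) ≤ c·ω(t) for all t > 0 and some c > 0. Suppose x ∈ H and there is m > 0 such that the best approximation satisfies E_r(x,B) ≤ m·ω(1/r) for all r > 0. Then for every k ≥ 1 there exists c_k > 0 such that ω_k(t, x, B) ≤ c_k · t^k · ∫_t^1 ω(τ)/τ^{k+1} dτ for all 0 < t ≤ 1/2. -/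
/-!
Split the spectral line into the dyadic shells `2 ^ j < |b| ≤ 2 ^ (j + 1)`, `j < N`, where
`t ≤ 2 ^ (-N) ≤ 2 t`. The multiplier `(e^{iτb} - 1)^k` is at most `τ^k` on `|b| ≤ 1`,
at most `(2 ^ (j + 1) τ)^k` on the `j`-th shell, where `x` has norm at most
`E_{2^j}(x) ≤ m ω(2^{-j})`, and at most `2^k` beyond `2^N`. Doubling turns
`2^{(j+1)k} ω(2^{-j})` into a multiple of the integral of `ω(τ)/τ^{k+1}` over
`[2^{-(j+1)}, 2^{-j}]`, and these intervals tile `[2^{-N}, 1] ⊆ [t, 1]`; the tail term is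
controlled by `ω(2^{-N}) ≤ ω(2t) ≤ c ω(t)`, and `ω(t)` by the integral over `[t, 2t]`.
If `ω(1/2) = 0`, doubling forces `ω = 0`, so `x` is carried by `b = 0`, where the
multiplier vanishes.
-/

open MeasureTheory Complex Set Real intervalIntegral

theorem exists_one_div_two_pow_mem_Icc {t : ℝ} (ht : 0 < t) (ht1 : t ≤ 1) :
    ∃ N : ℕ, 1 / 2 ^ N ∈ Icc t (2 * t) := by
  obtain ⟨N, h1, h2⟩ := exists_nat_pow_near (one_le_one_div ht ht1) one_lt_two
  refine ⟨N, ?_, ?_⟩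
  · rw [le_div_iff₀ (by positivity)]
    rwa [le_div_iff₀ ht, mul_comm] at h1
  · rw [div_le_iff₀ (by positivity)]
    rw [div_lt_iff₀ ht, pow_succ] at h2
    linarith

section Modulus

variable {ω : ℝ → ℝ} {k : ℕ}

theorem intervalIntegrable_div_pow (hω : ContinuousOn ω (Ici 0)) {a d : ℝ} (ha : 0 < a)
    (hd : 0 < d) : IntervalIntegrable (fun τ => ω τ / τ ^ (k + 1)) volume a d := by
  refine ContinuousOn.intervalIntegrable ((hω.mono fun u hu => ?_).div (continuousOn_pow _)
    fun u hu => pow_ne_zero _ ((lt_min ha hd).trans_le hu.1).ne')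
  exact (le_min ha.le hd.le).trans hu.1

theorem integral_div_pow_mono_interval (hω : ContinuousOn ω (Ici 0))
    (hnn : ∀ t, 0 ≤ t → 0 ≤ ω t) {t a d e : ℝ} (ht : 0 < t) (hta : t ≤ a) (had : a ≤ d)
    (hde : d ≤ e) :
    ∫ τ in a..d, ω τ / τ ^ (k + 1) ≤ ∫ τ in t..e, ω τ / τ ^ (k + 1) :=
  integral_mono_interval hta had hde
    (ae_restrict_of_forall_mem measurableSet_Ioc fun u hu =>
      div_nonneg (hnn u (ht.le.trans hu.1.le)) (pow_nonneg (ht.le.trans hu.1.le) _))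
    (intervalIntegrable_div_pow hω ht (ht.trans_le (hta.trans (had.trans hde))))

theorem sub_mul_div_pow_le_integral (hω : ContinuousOn ω (Ici 0))
    (hmono : MonotoneOn ω (Ici 0)) (hnn : ∀ t, 0 ≤ t → 0 ≤ ω t) {a d : ℝ} (ha : 0 < a)
    (had : a ≤ d) : (d - a) * (ω a / d ^ (k + 1)) ≤ ∫ τ in a..d, ω τ / τ ^ (k + 1) := by
  calc (d - a) * (ω a / d ^ (k + 1))
    _ = ∫ _ in a..d, ω a / d ^ (k + 1) := by rw [intervalIntegral.integral_const, smul_eq_mul]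
    _ ≤ _ := integral_mono_on had intervalIntegrable_const
        (intervalIntegrable_div_pow hω ha (ha.trans_le had)) fun u hu =>
          have hu0 : 0 < u := ha.trans_le hu.1
          div_le_div₀ (hnn u hu0.le) (hmono ha.le hu0.le hu.1) (by positivity)
            (pow_le_pow_left₀ hu0.le hu.2 _)

theorem integral_div_pow_pos (hω : ContinuousOn ω (Ici 0)) (hmono : MonotoneOn ω (Ici 0))
    (hnn : ∀ t, 0 ≤ t → 0 ≤ ω t) {a d : ℝ} (ha : 0 < a) (had : a < d) (hωa : 0 < ω a) :
    0 < ∫ τ in a..d, ω τ / τ ^ (k + 1) :=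
  (mul_pos (sub_pos.mpr had) (div_pos hωa (pow_pos (ha.trans had) _))).trans_le
    (sub_mul_div_pow_le_integral hω hmono hnn ha had.le)

theorem le_two_pow_mul_integral (hω : ContinuousOn ω (Ici 0)) (hmono : MonotoneOn ω (Ici 0))
    (hnn : ∀ t, 0 ≤ t → 0 ≤ ω t) {s : ℝ} (hs : 0 < s) :
    ω s ≤ 2 ^ (k + 1) * s ^ k * ∫ τ in s..2 * s, ω τ / τ ^ (k + 1) := by
  have h := sub_mul_div_pow_le_integral (k := k) hω hmono hnn hs (by linarith : s ≤ 2 * s)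
  rw [show (2 * s - s) * (ω s / (2 * s) ^ (k + 1)) = ω s / (2 ^ (k + 1) * s ^ k) by
    field_simp; ring, div_le_iff₀ (by positivity)] at h
  linarith

theorem eq_zero_of_doubling_of_eq_zero (hmono : MonotoneOn ω (Ici 0))
    (hnn : ∀ t, 0 ≤ t → 0 ≤ ω t) {c : ℝ} (hdoubling : ∀ t > 0, ω (2 * t) ≤ c * ω t) {s : ℝ}
    (hs : 0 < s) (h0 : ω s = 0) {u : ℝ} (hu : 0 ≤ u) : ω u = 0 := by
  have hpow (n : ℕ) : ω (2 ^ n * s) = 0 := by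
    induction n with
    | zero => simpa using h0
    | succ n ih =>
      refine le_antisymm ?_ (hnn (2 ^ (n + 1) * s) (by positivity))
      calc ω (2 ^ (n + 1) * s) = ω (2 * (2 ^ n * s)) := by ring_nf
        _ ≤ c * ω (2 ^ n * s) := hdoubling _ (by positivity)
        _ = 0 := by rw [ih, mul_zero]
  obtain ⟨n, hn⟩ := pow_unbounded_of_one_lt (u / s) one_lt_two
  have hle : ω u ≤ ω (2 ^ n * s) :=
    hmono hu (mem_Ici.mpr (by positivity)) ((div_lt_iff₀ hs).mp hn).le
  exact le_antisymm (hle.trans_eq (hpow n)) (hnn u hu)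

theorem sum_integral_dyadic (hω : ContinuousOn ω (Ici 0)) (N : ℕ) :
    ∑ j ∈ Finset.range N, ∫ τ in 1 / 2 ^ (j + 1)..1 / 2 ^ j, ω τ / τ ^ (k + 1) =
      ∫ τ in 1 / 2 ^ N..1, ω τ / τ ^ (k + 1) := by
  induction N with
  | zero => simp
  | succ N ih =>
    rw [Finset.sum_range_succ, ih, add_comm, integral_add_adjacent_intervals] <;>
      exact intervalIntegrable_div_pow hω (by positivity) (by positivity)

theorem pow_mul_le_integral_dyadic (hω : ContinuousOn ω (Ici 0))
    (hmono : MonotoneOn ω (Ici 0)) (hnn : ∀ t, 0 ≤ t → 0 ≤ ω t) {c : ℝ} (hc : 0 ≤ c)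
    (hdoubling : ∀ t > 0, ω (2 * t) ≤ c * ω t) (j : ℕ) :
    (2 ^ (j + 1)) ^ k * ω (1 / 2 ^ j) ≤
      c * 2 ^ (k + 1) * ∫ τ in 1 / 2 ^ (j + 1)..1 / 2 ^ j, ω τ / τ ^ (k + 1) := by
  set s : ℝ := 1 / 2 ^ (j + 1)
  have hs : 0 < s := by positivity
  have h2s : 2 * s = 1 / 2 ^ j := by simp only [s, pow_succ]; field_simp
  have hω2s := le_two_pow_mul_integral (k := k) hω hmono hnn hs
  rw [h2s] at hω2s
  calc (2 ^ (j + 1)) ^ k * ω (1 / 2 ^ j) ≤ (2 ^ (j + 1)) ^ k * (c * ω s) := by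
        gcongr; rw [← h2s]; exact hdoubling s hs
    _ ≤ (2 ^ (j + 1)) ^ k * (c * (2 ^ (k + 1) * s ^ k *
          ∫ τ in 1 / 2 ^ (j + 1)..1 / 2 ^ j, ω τ / τ ^ (k + 1))) := by gcongr
    _ = _ := by
      rw [show (2 : ℝ) ^ (j + 1) = s⁻¹ by simp [s], inv_pow]
      field_simp

theorem dyadic_sum_le_mul_integral (hω : ContinuousOn ω (Ici 0))
    (hmono : MonotoneOn ω (Ici 0)) (hnn : ∀ t, 0 ≤ t → 0 ≤ ω t) {c : ℝ} (hc : 0 ≤ c)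
    (hdoubling : ∀ t > 0, ω (2 * t) ≤ c * ω t)
    (hI₀ : 0 < ∫ τ in (1 / 2 : ℝ)..1, ω τ / τ ^ (k + 1)) {M m : ℝ} (hM : 0 ≤ M) (hm : 0 ≤ m)
    {a t : ℝ} (ha : 0 ≤ a) (hat : a ≤ t) (ht : 0 < t) (ht2 : t ≤ 1 / 2) {N : ℕ}
    (htN : t ≤ 1 / 2 ^ N) (hNt : 1 / 2 ^ N ≤ 2 * t) :
    a ^ k * M + ∑ j ∈ Finset.range N, (a * 2 ^ (j + 1)) ^ k * (m * ω (1 / 2 ^ j)) +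
        2 ^ k * (m * ω (1 / 2 ^ N)) ≤
      (M / (∫ τ in (1 / 2 : ℝ)..1, ω τ / τ ^ (k + 1)) + m * c * 2 ^ (k + 1) +
        2 ^ k * m * c * 2 ^ (k + 1)) * t ^ k * ∫ τ in t..1, ω τ / τ ^ (k + 1) := by
  set I := ∫ τ in t..1, ω τ / τ ^ (k + 1)
  set I₀ := ∫ τ in (1 / 2 : ℝ)..1, ω τ / τ ^ (k + 1)
  have hI₀I : I₀ ≤ I := integral_div_pow_mono_interval hω hnn ht ht2 (by norm_num) le_rfl
  have hlow : a ^ k * M ≤ M / I₀ * t ^ k * I :=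
    calc a ^ k * M ≤ t ^ k * M := by gcongr
      _ = M / I₀ * t ^ k * I₀ := by field_simp
      _ ≤ M / I₀ * t ^ k * I := by gcongr
  have hshell : ∑ j ∈ Finset.range N, (a * 2 ^ (j + 1)) ^ k * (m * ω (1 / 2 ^ j)) ≤
      m * c * 2 ^ (k + 1) * t ^ k * I := by
    have hdyadic : ∫ τ in 1 / 2 ^ N..1, ω τ / τ ^ (k + 1) ≤ I :=
      integral_div_pow_mono_interval hω hnn ht htN
        ((div_le_one (by positivity)).mpr (one_le_pow₀ one_le_two)) le_rfl
    calc ∑ j ∈ Finset.range N, (a * 2 ^ (j + 1)) ^ k * (m * ω (1 / 2 ^ j))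
      _ = a ^ k * m * ∑ j ∈ Finset.range N, (2 ^ (j + 1)) ^ k * ω (1 / 2 ^ j) := by
        rw [Finset.mul_sum]
        exact Finset.sum_congr rfl fun j _ => by ring
      _ ≤ a ^ k * m * ∑ j ∈ Finset.range N,
          c * 2 ^ (k + 1) * ∫ τ in 1 / 2 ^ (j + 1)..1 / 2 ^ j, ω τ / τ ^ (k + 1) := by
        exact mul_le_mul_of_nonneg_left (Finset.sum_le_sum fun j _ =>
          pow_mul_le_integral_dyadic hω hmono hnn hc hdoubling j) (by positivity)
      _ = a ^ k * m * (c * 2 ^ (k + 1) * ∫ τ in 1 / 2 ^ N..1, ω τ / τ ^ (k + 1)) := by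
        rw [← Finset.mul_sum, sum_integral_dyadic hω]
      _ ≤ a ^ k * m * (c * 2 ^ (k + 1) * I) := by gcongr
      _ ≤ t ^ k * m * (c * 2 ^ (k + 1) * I) := by
        have : 0 ≤ I := hI₀.le.trans hI₀I
        gcongr
      _ = m * c * 2 ^ (k + 1) * t ^ k * I := by ring
  have hhigh : ω (1 / 2 ^ N) ≤ c * 2 ^ (k + 1) * t ^ k * I :=
    calc ω (1 / 2 ^ N) ≤ ω (2 * t) :=
        hmono (mem_Ici.mpr (by positivity)) (mem_Ici.mpr (by positivity)) hNt
      _ ≤ c * ω t := hdoubling t ht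
      _ ≤ c * (2 ^ (k + 1) * t ^ k * ∫ τ in t..2 * t, ω τ / τ ^ (k + 1)) := by
        gcongr
        exact le_two_pow_mul_integral hω hmono hnn ht
      _ ≤ c * 2 ^ (k + 1) * t ^ k * I := by
        rw [← mul_assoc, ← mul_assoc]
        gcongr
        exact integral_div_pow_mono_interval hω hnn ht le_rfl (by linarith) (by linarith)
  have hhigh' := mul_le_mul_of_nonneg_left hhigh (by positivity : (0 : ℝ) ≤ 2 ^ k * m)
  linarith

end Modulus

theorem norm_exp_I_mul_mul_sub_one_pow_le (τ β : ℝ) (k : ℕ) :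
    ‖(exp (I * τ * β) - 1) ^ k‖ ≤ (|τ| * |β|) ^ k := by
  rw [norm_pow, ← abs_mul, show I * τ * β = I * ((τ * β : ℝ) : ℂ) by push_cast; ring]
  gcongr
  exact Real.norm_exp_I_mul_ofReal_sub_one_le

theorem norm_exp_I_mul_mul_sub_one_pow_le_two_pow (τ β : ℝ) (k : ℕ) :
    ‖(exp (I * τ * β) - 1) ^ k‖ ≤ 2 ^ k := by
  rw [norm_pow, show I * τ * β = ((τ * β : ℝ) : ℂ) * I by push_cast; ring]
  gcongr
  calc ‖exp ((τ * β : ℝ) * I) - 1‖ ≤ ‖exp ((τ * β : ℝ) * I)‖ + ‖(1 : ℂ)‖ :=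
      norm_sub_le _ _
    _ = 2 := by rw [norm_exp_ofReal_mul_I]; norm_num

section Spectral

variable {X E F : Type*} {b : X → ℝ} [NormedAddCommGroup E] [NormedAddCommGroup F]

-- `x - E([-r, r]) x` for `B` the multiplication by `b`, so that `E_r(x, B)` is its norm.
noncomputable def tailCut (b : X → ℝ) (x : X → E) (r : ℝ) : X → E :=
  fun s => if |b s| ≤ r then 0 else x s

theorem tailCut_of_neg {x : X → E} {r : ℝ} (hr : r < 0) : tailCut b x r = x :=
  funext fun _ => if_neg (hr.trans_le (abs_nonneg _)).not_ge

variable [MeasurableSpace X] {μ : Measure X} {p : ENNReal}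

theorem aestronglyMeasurable_tailCut (hb : Measurable b) {x : X → E}
    (hx : AEStronglyMeasurable x μ) (r : ℝ) : AEStronglyMeasurable (tailCut b x r) μ := by
  have : tailCut b x r = {s | |b s| ≤ r}ᶜ.indicator x := by
    ext s
    by_cases hs : |b s| ≤ r <;> simp [tailCut, hs]
  rw [this]
  exact hx.indicator (measurableSet_le hb.abs measurable_const).compl

theorem eLpNorm_tailCut_le {g : X → E} {x : X → F} {M : ℝ} (h : ∀ s, ‖g s‖ ≤ M * ‖x s‖)
    (r : ℝ) : eLpNorm (tailCut b g r) p μ ≤ ENNReal.ofReal M * eLpNorm (tailCut b x r) p μ :=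
  eLpNorm_le_mul_eLpNorm_of_ae_le_mul (ae_of_all _ fun s => by
    unfold tailCut; split_ifs <;> simp [h s]) p

theorem eLpNorm_tailCut_le_add (hp : 1 ≤ p) (hb : Measurable b) {g : X → E} {x : X → F}
    (hg : AEStronglyMeasurable g μ) {r R M : ℝ} (hrR : r ≤ R) (hM : 0 ≤ M)
    (h : ∀ s, |b s| ≤ R → ‖g s‖ ≤ M * ‖x s‖) :
    eLpNorm (tailCut b g r) p μ ≤
      ENNReal.ofReal M * eLpNorm (tailCut b x r) p μ + eLpNorm (tailCut b g R) p μ := by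
  have hshell : ∀ s, ‖(tailCut b g r - tailCut b g R) s‖ ≤ M * ‖tailCut b x r s‖ := by
    intro s
    by_cases hr : |b s| ≤ r
    · simp [tailCut, hr, hr.trans hrR]
    by_cases hR : |b s| ≤ R
    · simpa [tailCut, hr, hR] using h s hR
    · simp only [tailCut, hr, hR, Pi.sub_apply, if_false, sub_self, norm_zero]
      positivity
  calc eLpNorm (tailCut b g r) p μ
    _ = eLpNorm ((tailCut b g r - tailCut b g R) + tailCut b g R) p μ := by rw [sub_add_cancel]
    _ ≤ eLpNorm (tailCut b g r - tailCut b g R) p μ + eLpNorm (tailCut b g R) p μ :=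
      eLpNorm_add_le ((aestronglyMeasurable_tailCut hb hg r).sub
        (aestronglyMeasurable_tailCut hb hg R)) (aestronglyMeasurable_tailCut hb hg R) hp
    _ ≤ _ := by gcongr; exact eLpNorm_le_mul_eLpNorm_of_ae_le_mul (ae_of_all _ hshell) p

theorem eLpNorm_le_add_eLpNorm_tailCut (hp : 1 ≤ p) (hb : Measurable b) {g : X → E}
    {x : X → F} (hg : AEStronglyMeasurable g μ) {r M : ℝ} (hr : 0 ≤ r) (hM : 0 ≤ M)
    (h : ∀ s, |b s| ≤ r → ‖g s‖ ≤ M * ‖x s‖) :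
    eLpNorm g p μ ≤ ENNReal.ofReal M * eLpNorm x p μ + eLpNorm (tailCut b g r) p μ := by
  simpa only [tailCut_of_neg neg_one_lt_zero] using
    eLpNorm_tailCut_le_add hp hb hg (by linarith : (-1 : ℝ) ≤ r) hM h

theorem eLpNorm_le_dyadic (hp : 1 ≤ p) (hb : Measurable b) {g : X → E} {x : X → F}
    (hg : AEStronglyMeasurable g μ) {a : ℝ} (ha : 0 ≤ a) {k : ℕ}
    (hlow : ∀ s, ‖g s‖ ≤ (a * |b s|) ^ k * ‖x s‖) (N : ℕ) :
    eLpNorm g p μ ≤ ENNReal.ofReal (a ^ k) * eLpNorm x p μ +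
      ∑ j ∈ Finset.range N,
        ENNReal.ofReal ((a * 2 ^ (j + 1)) ^ k) * eLpNorm (tailCut b x (2 ^ j)) p μ +
      eLpNorm (tailCut b g (2 ^ N)) p μ := by
  induction N with
  | zero =>
    simpa using eLpNorm_le_add_eLpNorm_tailCut hp hb hg zero_le_one (by positivity)
      fun s hs => (hlow s).trans (by gcongr; exact mul_le_of_le_one_right ha (by simpa using hs))
  | succ N ih =>
    refine ih.trans ?_
    rw [Finset.sum_range_succ, ← add_assoc (ENNReal.ofReal (a ^ k) * _),
      add_assoc _ (ENNReal.ofReal _ * _)]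
    gcongr
    exact eLpNorm_tailCut_le_add hp hb hg (pow_le_pow_right₀ one_le_two N.le_succ)
      (by positivity) fun s hs => (hlow s).trans (by gcongr)

theorem eLpNorm_eq_zero_of_eLpNorm_tailCut_eq_zero (hp : 1 ≤ p) (hb : Measurable b)
    {g : X → E} {x : X → F} (hg : AEStronglyMeasurable g μ) (hx : eLpNorm x p μ ≠ ⊤)
    {a : ℝ} (ha : 0 ≤ a) {k : ℕ} (hk : k ≠ 0) (hlow : ∀ s, ‖g s‖ ≤ (a * |b s|) ^ k * ‖x s‖)
    {C : ℝ} (hhigh : ∀ s, ‖g s‖ ≤ C * ‖x s‖)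
    (htail : ∀ r > 0, eLpNorm (tailCut b x r) p μ = 0) : eLpNorm g p μ = 0 := by
  have hbound : ∀ r > 0, eLpNorm g p μ ≤ ENNReal.ofReal ((a * r) ^ k) * eLpNorm x p μ := by
    intro r hr
    calc eLpNorm g p μ
      _ ≤ ENNReal.ofReal ((a * r) ^ k) * eLpNorm x p μ + eLpNorm (tailCut b g r) p μ :=
        eLpNorm_le_add_eLpNorm_tailCut hp hb hg hr.le (by positivity)
          fun s hs => (hlow s).trans (by gcongr)
      _ ≤ ENNReal.ofReal ((a * r) ^ k) * eLpNorm x p μ +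
          ENNReal.ofReal C * eLpNorm (tailCut b x r) p μ := by
        gcongr
        exact eLpNorm_tailCut_le hhigh r
      _ = _ := by simp [htail r hr]
  have hlim : Filter.Tendsto (fun r => ENNReal.ofReal ((a * r) ^ k) * eLpNorm x p μ)
      (nhdsWithin 0 (Ioi 0)) (nhds 0) := by
    have h : Continuous fun r : ℝ => ENNReal.ofReal ((a * r) ^ k) :=
      ENNReal.continuous_ofReal.comp (by fun_prop)
    replace h := h.tendsto 0
    simpa [hk] using ENNReal.Tendsto.mul_const (h.mono_left nhdsWithin_le_nhds) (Or.inr hx)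
  exact nonpos_iff_eq_zero.mp (ge_of_tendsto hlim (eventually_nhdsWithin_of_forall hbound))

theorem eLpNorm_le_ofReal_dyadic (hp : 1 ≤ p) (hb : Measurable b) {g : X → E} {x : X → F}
    (hg : AEStronglyMeasurable g μ) {a : ℝ} (ha : 0 ≤ a) {k : ℕ}
    (hlow : ∀ s, ‖g s‖ ≤ (a * |b s|) ^ k * ‖x s‖) {C : ℝ} (hC : 0 ≤ C)
    (hhigh : ∀ s, ‖g s‖ ≤ C * ‖x s‖) {M : ℝ} (hM0 : 0 ≤ M)
    (hM : eLpNorm x p μ ≤ ENNReal.ofReal M) {e : ℝ → ℝ} (he0 : ∀ r > 0, 0 ≤ e r)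
    (he : ∀ r > 0, eLpNorm (tailCut b x r) p μ ≤ ENNReal.ofReal (e r)) (N : ℕ) :
    eLpNorm g p μ ≤ ENNReal.ofReal
      (a ^ k * M + ∑ j ∈ Finset.range N, (a * 2 ^ (j + 1)) ^ k * e (2 ^ j) + C * e (2 ^ N)) := by
  have hshell (j : ℕ) : 0 ≤ (a * 2 ^ (j + 1)) ^ k * e (2 ^ j) :=
    mul_nonneg (by positivity) (he0 _ (by positivity))
  have hlow0 : 0 ≤ a ^ k * M := mul_nonneg (pow_nonneg ha k) hM0
  refine (eLpNorm_le_dyadic hp hb hg ha hlow N).trans ?_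
  rw [ENNReal.ofReal_add (add_nonneg hlow0 (Finset.sum_nonneg fun j _ => hshell j))
      (mul_nonneg hC (he0 _ (by positivity))),
    ENNReal.ofReal_add hlow0 (Finset.sum_nonneg fun j _ => hshell j),
    ENNReal.ofReal_sum_of_nonneg fun j _ => hshell j, ENNReal.ofReal_mul (pow_nonneg ha k),
    ENNReal.ofReal_mul hC]
  gcongr with j
  · rw [ENNReal.ofReal_mul (by positivity)]
    gcongr
    exact he _ (by positivity)
  · exact (eLpNorm_tailCut_le hhigh _).trans (by gcongr; exact he _ (by positivity))

end Spectral

theorem inverse_lemma_general {X : Type*} [MeasurableSpace X] (μ : Measure X)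
    (b : X → ℝ) (hb : Measurable b)
    (ω : ℝ → ℝ) (hωcont : ContinuousOn ω (Ici (0 : ℝ)))
    (hωmono : MonotoneOn ω (Ici (0 : ℝ)))
    (hωnonneg : ∀ t, 0 ≤ t → 0 ≤ ω t)
    (c : ℝ) (hc : 0 < c) (hωdoubling : ∀ t > (0 : ℝ), ω (2 * t) ≤ c * ω t)
    (x : X → ℂ) (hx : MemLp x 2 μ)
    (m : ℝ) (hm : 0 < m)
    (happrox : ∀ r > (0 : ℝ),
      eLpNorm (fun s => if |b s| ≤ r then 0 else x s) 2 μ ≤ ENNReal.ofReal (m * ω (1 / r)))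
    (k : ℕ) (hk : 1 ≤ k) :
    ∃ ck > (0 : ℝ), ∀ t : ℝ, 0 < t → t ≤ 1 / 2 →
      (⨆ τ ∈ Ioc (0 : ℝ) t,
          eLpNorm (fun s => (Complex.exp (Complex.I * τ * b s) - 1) ^ k * x s) 2 μ)
        ≤ ENNReal.ofReal (ck * t ^ k * ∫ τ in t..1, ω τ / τ ^ (k + 1)) := by
  have hg (τ : ℝ) : AEStronglyMeasurable (fun s => (exp (I * τ * b s) - 1) ^ k * x s) μ :=
    (by fun_prop : Measurable fun s => (exp (I * τ * b s) - 1) ^ k).aestronglyMeasurable.mul hx.1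
  have hlow (τ : ℝ) (s : X) : ‖(exp (I * τ * b s) - 1) ^ k * x s‖ ≤ (|τ| * |b s|) ^ k * ‖x s‖ := by
    rw [norm_mul]; gcongr; exact norm_exp_I_mul_mul_sub_one_pow_le τ (b s) k
  have hhigh (τ : ℝ) (s : X) : ‖(exp (I * τ * b s) - 1) ^ k * x s‖ ≤ 2 ^ k * ‖x s‖ := by
    rw [norm_mul]; gcongr; exact norm_exp_I_mul_mul_sub_one_pow_le_two_pow τ (b s) k
  rcases (hωnonneg (1 / 2) (by norm_num)).eq_or_lt with hdeg | hpos
  · have htail (r : ℝ) (hr : 0 < r) : eLpNorm (tailCut b x r) 2 μ = 0 := by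
      have h := happrox r hr
      rwa [eq_zero_of_doubling_of_eq_zero hωmono hωnonneg hωdoubling (by norm_num) hdeg.symm
        (by positivity), mul_zero, ENNReal.ofReal_zero, nonpos_iff_eq_zero] at h
    refine ⟨1, one_pos, fun t _ _ => iSup₂_le fun τ _ => ?_⟩
    rw [eLpNorm_eq_zero_of_eLpNorm_tailCut_eq_zero one_le_two hb (hg τ) hx.2.ne (abs_nonneg τ)
      (by omega) (hlow τ) (hhigh τ) htail]
    exact zero_le
  · set I₀ := ∫ τ in (1 / 2 : ℝ)..1, ω τ / τ ^ (k + 1)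
    have hI₀ : 0 < I₀ :=
      integral_div_pow_pos hωcont hωmono hωnonneg (by norm_num) (by norm_num) hpos
    set M := (eLpNorm x 2 μ).toReal
    refine ⟨M / I₀ + m * c * 2 ^ (k + 1) + 2 ^ k * m * c * 2 ^ (k + 1), by positivity,
      fun t ht ht2 => iSup₂_le fun τ ⟨hτ, hτt⟩ => ?_⟩
    obtain ⟨N, htN, hNt⟩ := exists_one_div_two_pow_mem_Icc ht (by linarith)
    refine (eLpNorm_le_ofReal_dyadic one_le_two hb (hg τ) (abs_nonneg τ) (hlow τ)
      (by positivity) (hhigh τ) ENNReal.toReal_nonneg (ENNReal.ofReal_toReal hx.2.ne).ge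
      (e := fun r => m * ω (1 / r)) (fun r hr => mul_nonneg hm.le (hωnonneg _ (by positivity)))
      happrox N).trans
      (ENNReal.ofReal_le_ofReal ?_)
    exact dyadic_sum_le_mul_integral hωcont hωmono hωnonneg hc.le hωdoubling hI₀
      ENNReal.toReal_nonneg hm.le (abs_nonneg τ) ((abs_of_pos hτ).trans_le hτt) ht ht2 htN hNt

/-- Inverse theorem, Lemma (Lemma 3).  `B` is realized as multiplication by the measurable
function `b` on `L²(μ)`; `E_r(x,B) = ‖x - E([-r,r])x‖` is the norm of `x` restricted to
`{|b| > r}` and `ω_k(t,x,B) = sup_{0<τ≤t} ‖(e^{iτB}-I)^k x‖`.  If `ω` is a modulus of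
continuity with the doubling property and `E_r(x,B) ≤ m·ω(1/r)` for all `r > 0`, then for
every `k ≥ 1` there is `c_k > 0` with
`ω_k(t,x,B) ≤ c_k · t^k · ∫_t^1 ω(τ)/τ^{k+1} dτ` for all `0 < t ≤ 1/2`. -/
theorem inverse_lemma {X : Type*} [MeasurableSpace X] (μ : Measure X)
    (b : X → ℝ) (hb : Measurable b)
    (ω : ℝ → ℝ) (hωcont : ContinuousOn ω (Ici (0 : ℝ)))
    (hωmono : MonotoneOn ω (Ici (0 : ℝ))) (hωzero : ω 0 = 0)
    (hωnonneg : ∀ t, 0 ≤ t → 0 ≤ ω t)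
    (c : ℝ) (hc : 0 < c) (hωdoubling : ∀ t > (0 : ℝ), ω (2 * t) ≤ c * ω t)
    (x : X → ℂ) (hx : MemLp x 2 μ)
    (m : ℝ) (hm : 0 < m)
    (happrox : ∀ r > (0 : ℝ),
      eLpNorm (fun s => if |b s| ≤ r then 0 else x s) 2 μ ≤ ENNReal.ofReal (m * ω (1 / r)))
    (k : ℕ) (hk : 1 ≤ k) :
    ∃ ck > (0 : ℝ), ∀ t : ℝ, 0 < t → t ≤ 1 / 2 →
      (⨆ τ ∈ Ioc (0 : ℝ) t,
          eLpNorm (fun s => (Complex.exp (Complex.I * τ * b s) - 1) ^ k * x s) 2 μ)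
        ≤ ENNReal.ofReal (ck * t ^ k * ∫ τ in t..1, ω τ / τ ^ (k + 1)) :=
  inverse_lemma_general μ b hb ω hωcont hωmono hωnonneg c hc hωdoubling x hx m hm happrox k hk
end

section
/- Let B be a self-adjoint operator on a Hilbert space H. Let ω : [0,∞) → [0,∞) be continuous, nondecreasing, ω(0) = 0, ω(2t) ≤ c·ω(t) for some c > 0, and ∫₀¹ ω(t)/t dt < ∞. Let G : ℝ → ℝ be even, nonnegative, nondecreasing on [0,∞), with sup_{λ>0} G(2λ)/G(λ) < ∞. If x ∈ H satisfies E_r(x,B) ≤ (m/G(r))·ω(1/r) for all r > 0 and some m > 0, then x ∈ D(G(B)). -/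
/-!
Split `{1 < |b|}` into the dyadic shells `2 ^ k < |b| ≤ 2 ^ (k + 1)`. On the `k`-th shell doubling
gives `G (b s) ≤ c₁ * G (2 ^ k)`, while the hypothesis at `r = 2 ^ k` bounds the `L²` mass of `x`
beyond `2 ^ k` by `m * ω (2⁻ᵏ) / G (2 ^ k)`; so the shell contributes at most `(c₁ * m * ω (2⁻ᵏ))²`.
Comparing `ω (2⁻ᵏ)` with the integral of `ω t / t` over `(2⁻ᵏ⁻¹, 2⁻ᵏ]` turns the Dini condition
into `∑ₖ ω (2⁻ᵏ) < ∞`, and the sum of squares is finite as well.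
-/

open MeasureTheory Set

open scoped ENNReal

theorem exists_pow_lt_and_le_pow_succ {R : Type*} [Semiring R] [LinearOrder R]
    [IsStrictOrderedRing R] [Archimedean R] [ExistsAddOfLE R] {a t : R} (ha : 1 < a)
    (ht : 1 < t) : ∃ k : ℕ, a ^ k < t ∧ t ≤ a ^ (k + 1) := by
  obtain ⟨n, hn⟩ := pow_unbounded_of_one_lt t ha
  replace hn := hn.le
  induction n with
  | zero => exact absurd ht (by simpa using hn)
  | succ n ih =>
    rcases lt_or_ge (a ^ n) t with h | h
    · exact ⟨n, h, hn⟩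
    · exact ih h

theorem le_or_exists_pow_lt_of_doubling {G : ℝ → ℝ} {c : ℝ} (hmono : MonotoneOn G (Ici 0))
    (heven : ∀ t, G (-t) = G t) (hdoubling : ∀ t > 0, G (2 * t) ≤ c * G t) (t : ℝ) :
    G t ≤ G 1 ∨ ∃ k : ℕ, 2 ^ k < |t| ∧ G t ≤ c * G (2 ^ k) := by
  have habs : G t = G |t| := by rcases abs_choice t with h | h <;> simp [h, heven]
  rw [habs]
  rcases le_or_gt |t| 1 with ht | ht
  · exact .inl (hmono (abs_nonneg t) (mem_Ici.2 zero_le_one) ht)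
  obtain ⟨k, hk, hk'⟩ := exists_pow_lt_and_le_pow_succ one_lt_two ht
  refine .inr ⟨k, hk, (hmono (abs_nonneg t) (mem_Ici.2 (by positivity)) hk').trans ?_⟩
  simpa [pow_succ'] using hdoubling (2 ^ k) (by positivity)

theorem summable_dyadic_of_intervalIntegrable_div {ω : ℝ → ℝ} (hmono : MonotoneOn ω (Ioc 0 1))
    (hnonneg : ∀ t ∈ Ioc (0 : ℝ) 1, 0 ≤ ω t)
    (hint : IntervalIntegrable (fun t => ω t / t) volume 0 1) :
    Summable fun k : ℕ => ω (1 / 2 ^ k) := by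
  have hdyadic : ∀ k : ℕ, (1 : ℝ) / 2 ^ k ∈ Ioc 0 1 := fun k =>
    ⟨by positivity, div_le_one_of_le₀ (one_le_pow₀ one_le_two) (by positivity)⟩
  set I : ℕ → Set ℝ := fun k => Ioc (1 / 2 ^ (k + 1)) (1 / 2 ^ k)
  have hI : ∀ k, I k ⊆ Ioc 0 1 := fun k =>
    Ioc_subset_Ioc (hdyadic (k + 1)).1.le (hdyadic k).2
  have hanti : Antitone fun k : ℕ => (1 : ℝ) / 2 ^ k := fun i j hij =>
    one_div_le_one_div_of_le (by positivity) (pow_le_pow_right₀ one_le_two hij)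
  have hdisj : Pairwise (Function.onFun Disjoint I) := by
    simpa only [Order.succ_eq_add_one] using hanti.pairwise_disjoint_on_Ioc_succ
  have hint' : IntegrableOn (fun t => ω t / t) (⋃ k, I k) :=
    ((intervalIntegrable_iff_integrableOn_Ioc_of_le zero_le_one).1 hint).mono_set
      (iUnion_subset hI)
  have hsum : Summable fun k => ∫ t in I k, ω t / t :=
    (hasSum_integral_iUnion (fun _ => measurableSet_Ioc) hdisj hint').summable
  refine (summable_nat_add_iff 1).1 <| (hsum.mul_left 2).of_nonneg_of_le
    (fun k => hnonneg _ (hdyadic _)) fun k => ?_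
  -- On `I k` the integrand is at least `ω (1 / 2 ^ (k + 1)) * 2 ^ k`.
  have hlow := setIntegral_ge_of_const_le_real (c := ω (1 / 2 ^ (k + 1)) * 2 ^ k)
    measurableSet_Ioc measure_Ioc_lt_top.ne (fun t ht => ?_) (hint'.mono_set (subset_iUnion I k))
  · rw [Real.volume_real_Ioc_of_le (hanti k.le_succ)] at hlow
    calc ω (1 / 2 ^ (k + 1))
        = 2 * (ω (1 / 2 ^ (k + 1)) * 2 ^ k * (1 / 2 ^ k - 1 / 2 ^ (k + 1))) := by
          field_simp; ring
      _ ≤ 2 * ∫ t in I k, ω t / t := by gcongr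
  · have ht0 : t ∈ Ioc (0 : ℝ) 1 := hI k ht
    have h2t : (2 : ℝ) ^ k ≤ 1 / t := by
      rw [le_one_div (by positivity) ht0.1]; exact ht.2
    calc ω (1 / 2 ^ (k + 1)) * 2 ^ k ≤ ω t * (1 / t) :=
          mul_le_mul (hmono (hdyadic _) ht0 ht.1.le) h2t (by positivity) (hnonneg t ht0)
      _ = ω t / t := mul_one_div _ _

theorem ENNReal.tsum_sq_le_sq_tsum {ι : Type*} (a : ι → ℝ≥0∞) :
    ∑' i, a i ^ 2 ≤ (∑' i, a i) ^ 2 := by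
  calc ∑' i, a i ^ 2 ≤ ∑' i, (∑' j, a j) * a i :=
        ENNReal.tsum_le_tsum fun i => by rw [sq]; gcongr; exact ENNReal.le_tsum i
    _ = (∑' i, a i) ^ 2 := by rw [ENNReal.tsum_mul_left, sq]

theorem ENNReal.tsum_sq_ne_top_of_le_ofReal {ι : Type*} {a : ι → ℝ≥0∞} {f : ι → ℝ}
    (hf : Summable f) (ha : ∀ i, a i ≤ ENNReal.ofReal (f i)) :
    ∑' i, a i ^ 2 ≠ ∞ := by
  have hsum : ∑' i, a i ≤ ENNReal.ofReal (∑' i, |f i|) := by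
    rw [ENNReal.ofReal_tsum_of_nonneg (fun i => abs_nonneg _) hf.abs]
    exact ENNReal.tsum_le_tsum fun i => (ha i).trans (ofReal_le_ofReal (le_abs_self _))
  exact ne_top_of_le_ne_top (pow_ne_top ofReal_ne_top) ((tsum_sq_le_sq_tsum a).trans (by gcongr))

section

variable {X E : Type*} [MeasurableSpace X] [NormedAddCommGroup E]

theorem MeasureTheory.eLpNorm_two_sq_eq_lintegral (f : X → E) (μ : Measure X) :
    eLpNorm f 2 μ ^ 2 = ∫⁻ s, ‖f s‖ₑ ^ 2 ∂μ := by
  simpa using eLpNorm_nnreal_pow_eq_lintegral (f := f) (μ := μ) (p := 2) two_ne_zero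

variable {μ : Measure X} [NormedSpace ℝ E]

theorem memLp_two_smul_of_le_or_exists_mem {g : X → ℝ} {f : X → E}
    (hg : AEStronglyMeasurable g μ) (hf : MemLp f 2 μ) {C : ℝ≥0∞} (hC : C ≠ ∞)
    {S : ℕ → Set X} (hS : ∀ k, MeasurableSet (S k)) {a : ℕ → ℝ≥0∞}
    (hgS : ∀ s, ‖g s‖ₑ ≤ C ∨ ∃ k, s ∈ S k ∧ ‖g s‖ₑ ≤ a k)
    (hsum : ∑' k, (a k * eLpNorm f 2 (μ.restrict (S k))) ^ 2 ≠ ∞) :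
    MemLp (fun s => g s • f s) 2 μ := by
  refine ⟨hg.smul hf.1, ?_⟩
  have hf2 : AEMeasurable (fun s => ‖f s‖ₑ ^ 2) μ := hf.1.enorm.pow_const 2
  have hpt : ∀ s, ‖g s • f s‖ₑ ^ 2 ≤
      C ^ 2 * ‖f s‖ₑ ^ 2 + ∑' k, (S k).indicator (fun y => a k ^ 2 * ‖f y‖ₑ ^ 2) s := by
    intro s
    rw [enorm_smul, mul_pow]
    rcases hgS s with h | ⟨k, hk, h⟩
    · exact le_add_right (by gcongr)
    · refine le_add_left (le_trans ?_ (ENNReal.le_tsum k))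
      rw [indicator_of_mem hk]
      gcongr
  refine (ENNReal.pow_lt_top_iff.1 ?_).resolve_right two_ne_zero
  rw [eLpNorm_two_sq_eq_lintegral]
  calc ∫⁻ s, ‖g s • f s‖ₑ ^ 2 ∂μ
      ≤ ∫⁻ s, (C ^ 2 * ‖f s‖ₑ ^ 2 + ∑' k, (S k).indicator (fun y => a k ^ 2 * ‖f y‖ₑ ^ 2) s) ∂μ :=
        lintegral_mono hpt
    _ = C ^ 2 * eLpNorm f 2 μ ^ 2 + ∑' k, (a k * eLpNorm f 2 (μ.restrict (S k))) ^ 2 := by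
        rw [lintegral_add_left' (hf2.const_mul _), lintegral_const_mul'' _ hf2,
          lintegral_tsum fun k => (hf2.const_mul _).indicator (hS k)]
        simp only [lintegral_indicator (hS _), lintegral_const_mul'' _ hf2.restrict, mul_pow,
          eLpNorm_two_sq_eq_lintegral]
    _ < ∞ := ENNReal.add_lt_top.2 ⟨ENNReal.mul_lt_top (ENNReal.pow_lt_top hC.lt_top)
        (ENNReal.pow_lt_top hf.2), hsum.lt_top⟩

end

/-- By the spectral theorem `B` is realized as multiplication by `b` on `L²(μ)`: then
`E_r(x, B)` is the `L²` norm of `x` on `{r < |b|}`, and `x ∈ D(G(B))` means `G ∘ b • x ∈ L²(μ)`. -/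
theorem inverse_theorem_domain_general {X : Type*} [MeasurableSpace X] (μ : Measure X)
    (b : X → ℝ) (hb : Measurable b)
    (ω : ℝ → ℝ) (hωmono : MonotoneOn ω (Ici (0 : ℝ)))
    (hωnonneg : ∀ t, 0 ≤ t → 0 ≤ ω t)
    (hωint : IntervalIntegrable (fun t => ω t / t) MeasureTheory.volume 0 1)
    (G : ℝ → ℝ) (hGmeas : Measurable G) (hGnonneg : ∀ t, 0 ≤ G t)
    (hGeven : ∀ t, G (-t) = G t) (hGmono : MonotoneOn G (Ici (0 : ℝ)))
    (hGpos : ∀ lam > (0 : ℝ), 0 < G lam)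
    (c₁ : ℝ) (hGdoubling : ∀ lam > (0 : ℝ), G (2 * lam) ≤ c₁ * G lam)
    (x : X → ℂ) (hx : MemLp x 2 μ)
    (m : ℝ)
    (happrox : ∀ r > (0 : ℝ),
      eLpNorm (fun s => if |b s| ≤ r then 0 else x s) 2 μ
        ≤ ENNReal.ofReal (m / G r * ω (1 / r))) :
    MemLp (fun s => (G (b s) : ℝ) * x s) 2 μ := by
  have hS : ∀ r : ℝ, MeasurableSet {s | r < |b s|} := fun r =>
    measurableSet_lt measurable_const hb.abs
  have htail : ∀ r > (0 : ℝ), eLpNorm x 2 (μ.restrict {s | r < |b s|})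
      ≤ ENNReal.ofReal (m / G r * ω (1 / r)) := by
    intro r hr
    rw [← eLpNorm_indicator_eq_eLpNorm_restrict (hS r)]
    convert happrox r hr using 2
    ext s
    by_cases h : |b s| ≤ r <;> simp [indicator_apply, h]
  have hweight : ∀ s, ‖G (b s)‖ₑ ≤ ENNReal.ofReal (G 1) ∨ ∃ k : ℕ,
      s ∈ {s | 2 ^ k < |b s|} ∧ ‖G (b s)‖ₑ ≤ ENNReal.ofReal (c₁ * G (2 ^ k)) := by
    intro s
    rw [Real.enorm_of_nonneg (hGnonneg _)]
    exact (le_or_exists_pow_lt_of_doubling hGmono hGeven hGdoubling (b s)).imp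
      ENNReal.ofReal_le_ofReal fun ⟨k, hk, h⟩ => ⟨k, hk, ENNReal.ofReal_le_ofReal h⟩
  have hterm : ∀ k : ℕ, ENNReal.ofReal (c₁ * G (2 ^ k)) *
      eLpNorm x 2 (μ.restrict {s | 2 ^ k < |b s|}) ≤ ENNReal.ofReal (c₁ * m * ω (1 / 2 ^ k)) := by
    intro k
    have hGk := hGpos (2 ^ k) (by positivity)
    have hc₁Gk := (hGnonneg _).trans (hGdoubling (2 ^ k) (by positivity))
    calc _ ≤ ENNReal.ofReal (c₁ * G (2 ^ k)) * ENNReal.ofReal (m / G (2 ^ k) * ω (1 / 2 ^ k)) :=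
          by gcongr; exact htail _ (by positivity)
      _ = ENNReal.ofReal (c₁ * m * ω (1 / 2 ^ k)) := by
          rw [← ENNReal.ofReal_mul hc₁Gk]; congr 1; field_simp
  have hdini := summable_dyadic_of_intervalIntegrable_div (hωmono.mono fun t ht => ht.1.le)
    (fun t ht => hωnonneg t ht.1.le) hωint
  simpa only [Complex.real_smul, Function.comp_apply] using memLp_two_smul_of_le_or_exists_mem
    (hGmeas.comp hb).aestronglyMeasurable hx ENNReal.ofReal_ne_top (fun k => hS (2 ^ k)) hweight
    (ENNReal.tsum_sq_ne_top_of_le_ofReal (hdini.mul_left (c₁ * m)) hterm)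

/-- Inverse theorem, domain part (Theorem 2, first conclusion).  `B` is realized as
multiplication by the measurable function `b` on `L²(μ)`; membership `x ∈ D(G(B))` means
`G(b(·))·x ∈ L²(μ)`.  If `E_r(x,B) ≤ (m/G(r))·ω(1/r)` for all `r > 0`, then `x ∈ D(G(B))`. -/
theorem inverse_theorem_domain {X : Type*} [MeasurableSpace X] (μ : Measure X)
    (b : X → ℝ) (hb : Measurable b)
    (ω : ℝ → ℝ) (hωcont : ContinuousOn ω (Ici (0 : ℝ)))
    (hωmono : MonotoneOn ω (Ici (0 : ℝ))) (hωzero : ω 0 = 0)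
    (hωnonneg : ∀ t, 0 ≤ t → 0 ≤ ω t)
    (c : ℝ) (hc : 0 < c) (hωdoubling : ∀ t > (0 : ℝ), ω (2 * t) ≤ c * ω t)
    (hωint : IntervalIntegrable (fun t => ω t / t) MeasureTheory.volume 0 1)
    (G : ℝ → ℝ) (hGmeas : Measurable G) (hGnonneg : ∀ t, 0 ≤ G t)
    (hGeven : ∀ t, G (-t) = G t) (hGmono : MonotoneOn G (Ici (0 : ℝ)))
    (hGpos : ∀ lam > (0 : ℝ), 0 < G lam)
    (c₁ : ℝ) (hGdoubling : ∀ lam > (0 : ℝ), G (2 * lam) ≤ c₁ * G lam)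
    (x : X → ℂ) (hx : MemLp x 2 μ)
    (m : ℝ) (hm : 0 < m)
    (happrox : ∀ r > (0 : ℝ),
      eLpNorm (fun s => if |b s| ≤ r then 0 else x s) 2 μ
        ≤ ENNReal.ofReal (m / G r * ω (1 / r))) :
    MemLp (fun s => (G (b s) : ℝ) * x s) 2 μ :=
  inverse_theorem_domain_general μ b hb ω hωmono hωnonneg hωint G hGmeas hGnonneg hGeven hGmono
    hGpos c₁ hGdoubling x hx m happrox
end

section
/- Let B be a self-adjoint operator with spectral measure E on a Hilbert space H, and let x ∈ H. If ω(t) = t^α for some α > 0 and the best approximation satisfies E_r(x,B) = O(r^{-α}) as r → ∞, then for k > α (k ∈ ℕ) the modulus of continuity satisfies ω_k(t, x, B) = O(t^α) as t → 0⁺. -/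
/-!
Split `x` according to the dyadic scales `R 2^j`, `j ≤ L`, where `R 2^L ≈ 1/t`. Where
`|b| ≤ R 2^(j+1)` one has `|e^{iτb} - 1|^k ≤ (t R 2^(j+1))^k`, and the part of `x` beyond `R 2^j`
has norm `E_{R 2^j} ≤ C (R 2^j)^(-α)`; as `k > α` these contributions grow geometrically in `j`,
so their sum is dominated by the last one, which is `O(t^α)`. Beyond `R 2^L` the trivial bound
`|e^{iτb} - 1| ≤ 2` suffices, since there `E_{R 2^L} = O(t^α)`.
-/

open MeasureTheory Complex Set Real
open scoped ENNReal

lemma norm_exp_I_mul_ofReal_sub_one_le_two (θ : ℝ) : ‖cexp (I * θ) - 1‖ ≤ 2 :=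
  calc ‖cexp (I * θ) - 1‖ ≤ ‖cexp (I * θ)‖ + ‖(1 : ℂ)‖ := norm_sub_le _ _
    _ = 2 := by rw [norm_exp_I_mul_ofReal, norm_one]; norm_num

lemma sum_range_rpow_mul_two_pow_le {β : ℝ} (hβ : 0 < β) {R : ℝ} (hR : 0 ≤ R) (L : ℕ) :
    ∑ j ∈ Finset.range L, (R * 2 ^ j) ^ β ≤ (R * 2 ^ L) ^ β / (2 ^ β - 1) := by
  have hq : 1 < (2 : ℝ) ^ β := one_lt_rpow one_lt_two hβ
  have hterm : ∀ j : ℕ, (R * 2 ^ j) ^ β = R ^ β * ((2 : ℝ) ^ β) ^ j := fun j => by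
    rw [mul_rpow hR (by positivity), rpow_pow_comm zero_le_two]
  simp only [hterm, ← Finset.mul_sum, geom_sum_eq hq.ne']
  rw [mul_div_assoc]
  gcongr
  linarith

lemma sum_range_dyadic_le {α C t R : ℝ} {k L : ℕ} (hkα : α < k) (hC : 0 ≤ C) (ht : 0 < t)
    (hR : 0 < R) (hL : R * 2 ^ L ≤ t⁻¹) :
    ∑ j ∈ Finset.range L, (t * (R * 2 ^ (j + 1))) ^ k * (C * (R * 2 ^ j) ^ (-α))
      ≤ 2 ^ k * C / (2 ^ ((k : ℝ) - α) - 1) * t ^ α := by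
  have hβ : 0 < (k : ℝ) - α := sub_pos.2 hkα
  have hterm : ∀ j : ℕ, (t * (R * 2 ^ (j + 1))) ^ k * (C * (R * 2 ^ j) ^ (-α))
      = 2 ^ k * C * t ^ k * (R * 2 ^ j) ^ ((k : ℝ) - α) := fun j => by
    have hv : 0 < R * 2 ^ j := by positivity
    rw [rpow_sub hv, rpow_neg hv.le, rpow_natCast, pow_succ, mul_pow, mul_pow, mul_pow]
    ring
  have hlast : t ^ k * (R * 2 ^ L) ^ ((k : ℝ) - α) ≤ t ^ α := by
    calc t ^ k * (R * 2 ^ L) ^ ((k : ℝ) - α) ≤ t ^ k * t⁻¹ ^ ((k : ℝ) - α) := by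
          gcongr
      _ = t ^ α := by
          rw [inv_rpow ht.le, rpow_sub ht, rpow_natCast]
          field_simp
  calc ∑ j ∈ Finset.range L, (t * (R * 2 ^ (j + 1))) ^ k * (C * (R * 2 ^ j) ^ (-α))
      = 2 ^ k * C * t ^ k * ∑ j ∈ Finset.range L, (R * 2 ^ j) ^ ((k : ℝ) - α) := by
        simp only [hterm, Finset.mul_sum]
    _ ≤ 2 ^ k * C * t ^ k * ((R * 2 ^ L) ^ ((k : ℝ) - α) / (2 ^ ((k : ℝ) - α) - 1)) := by
        gcongr
        exact sum_range_rpow_mul_two_pow_le hβ hR.le L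
    _ = 2 ^ k * C / (2 ^ ((k : ℝ) - α) - 1) * (t ^ k * (R * 2 ^ L) ^ ((k : ℝ) - α)) := by ring
    _ ≤ 2 ^ k * C / (2 ^ ((k : ℝ) - α) - 1) * t ^ α := by
        have : 0 < (2 : ℝ) ^ ((k : ℝ) - α) - 1 := by linarith [one_lt_rpow one_lt_two hβ]
        gcongr

lemma dyadic_bound_le {α C M t R : ℝ} {k L : ℕ} (hα : 0 < α) (hkα : α < k) (hC : 0 ≤ C)
    (hM : 0 ≤ M) (ht : 0 < t) (hR : 0 < R) (hL : R * 2 ^ L ≤ t⁻¹)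
    (hL' : t⁻¹ < R * 2 ^ (L + 1)) :
    (t * (R * 2 ^ 0)) ^ k * M
      + ∑ j ∈ Finset.range L, (t * (R * 2 ^ (j + 1))) ^ k * (C * (R * 2 ^ j) ^ (-α))
      + 2 ^ k * (C * (R * 2 ^ L) ^ (-α))
      ≤ (R ^ α * M + 2 ^ k * C / (2 ^ ((k : ℝ) - α) - 1) + 2 ^ k * 2 ^ α * C) * t ^ α := by
  have htR : 0 < t * R := mul_pos ht hR
  have hlow : (t * (R * 2 ^ 0)) ^ k * M ≤ R ^ α * M * t ^ α := by
    have htR₁ : t * R ≤ 1 := by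
      have := (le_mul_of_one_le_right hR.le (one_le_pow₀ one_le_two)).trans hL
      rwa [← le_inv_mul_iff₀ ht, mul_one]
    calc (t * (R * 2 ^ 0)) ^ k * M = (t * R) ^ (k : ℝ) * M := by simp
      _ ≤ (t * R) ^ α * M :=
          mul_le_mul_of_nonneg_right (rpow_le_rpow_of_exponent_ge htR htR₁ hkα.le) hM
      _ = R ^ α * M * t ^ α := by rw [mul_rpow ht.le hR.le]; ring
  have htail : 2 ^ k * (C * (R * 2 ^ L) ^ (-α)) ≤ 2 ^ k * 2 ^ α * C * t ^ α := by
    have h2t : (2 * t)⁻¹ ≤ R * 2 ^ L := by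
      rw [pow_succ, ← mul_assoc] at hL'
      rw [mul_inv]
      linarith
    have : (R * 2 ^ L) ^ (-α) ≤ 2 ^ α * t ^ α :=
      calc (R * 2 ^ L) ^ (-α) ≤ (2 * t)⁻¹ ^ (-α) :=
            rpow_le_rpow_of_nonpos (by positivity) h2t (neg_nonpos.2 hα.le)
        _ = 2 ^ α * t ^ α := by
            rw [inv_rpow (by positivity), rpow_neg (by positivity), inv_inv,
              mul_rpow zero_le_two ht.le]
    calc 2 ^ k * (C * (R * 2 ^ L) ^ (-α)) ≤ 2 ^ k * (C * (2 ^ α * t ^ α)) := by gcongr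
      _ = 2 ^ k * 2 ^ α * C * t ^ α := by ring
  rw [add_mul, add_mul]
  exact add_le_add (add_le_add hlow (sum_range_dyadic_le hkα hC ht hR hL)) htail

lemma norm_exp_I_mul_sub_one_pow_le_mul_abs {τ t : ℝ} (hτ : 0 ≤ τ) (hτt : τ ≤ t) (β : ℝ)
    (k : ℕ) : ‖(cexp (I * τ * β) - 1) ^ k‖ ≤ (t * |β|) ^ k := by
  rw [norm_pow, show I * τ * β = I * ↑(τ * β) by push_cast; ring]
  gcongr
  calc ‖cexp (I * ↑(τ * β)) - 1‖ ≤ ‖τ * β‖ := norm_exp_I_mul_ofReal_sub_one_le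
    _ ≤ t * |β| := by rw [norm_mul, norm_of_nonneg hτ, Real.norm_eq_abs]; gcongr

lemma norm_exp_I_mul_sub_one_pow_le_two_pow (τ β : ℝ) (k : ℕ) :
    ‖(cexp (I * τ * β) - 1) ^ k‖ ≤ 2 ^ k := by
  rw [norm_pow, show I * τ * β = I * ↑(τ * β) by push_cast; ring]
  gcongr
  exact norm_exp_I_mul_ofReal_sub_one_le_two _

-- If `r j < u ≤ r (j + 1)` the `j`-th summand alone dominates `φ`; if `r L < u` the last term does.
lemma le_add_sum_ite_add_ite_of_monotoneOn {w : ℝ → ℝ} (hw : MonotoneOn w (Ici 0))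
    (hw₀ : ∀ u, 0 ≤ u → 0 ≤ w u) {r : ℕ → ℝ} (hr : ∀ j, 0 ≤ r j) {W φ u : ℝ}
    (hu : 0 ≤ u) (hφw : φ ≤ w u) (hφW : φ ≤ W) (L : ℕ) :
    φ ≤ w (r 0) + ∑ j ∈ Finset.range L, (if r j < u then w (r (j + 1)) else 0)
      + if r L < u then W else 0 := by
  have hS : ∀ n, 0 ≤ ∑ j ∈ Finset.range n, (if r j < u then w (r (j + 1)) else 0) :=
    fun n => Finset.sum_nonneg fun j _ => by split_ifs <;> simp [hw₀ _ (hr _)]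
  have hw₀r := hw₀ _ (hr 0)
  induction L with
  | zero =>
    split_ifs with h
    · rw [Finset.sum_range_zero, add_zero]; linarith
    · simpa using hφw.trans (hw hu (hr 0) (not_lt.1 h))
  | succ L ih =>
    rw [Finset.sum_range_succ]
    have hS' := hS L
    by_cases hL : r L < u
    · have hwL := hw₀ _ (hr (L + 1))
      simp only [hL, if_true]
      split_ifs with h
      · linarith
      · linarith [hw hu (hr _) (not_lt.1 h)]
    · simp only [hL, if_false] at ih ⊢
      split_ifs <;> linarith

section

variable {X E F : Type*} [NormedAddCommGroup E] [NormedAddCommGroup F]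

/-- `x - E([-r, r]) x`, for the spectral measure `E` of multiplication by `b`. -/
noncomputable def spectralTail (b : X → ℝ) (x : X → E) (r : ℝ) : X → E :=
  fun s => if |b s| ≤ r then 0 else x s

lemma spectralTail_eq_indicator (b : X → ℝ) (x : X → E) (r : ℝ) :
    spectralTail b x r = {s | r < |b s|}.indicator x := by
  ext s
  by_cases h : |b s| ≤ r <;> simp [spectralTail, indicator, h, not_lt.2]

lemma norm_spectralTail (b : X → ℝ) (x : X → E) (r : ℝ) (s : X) :
    ‖spectralTail b x r s‖ = if r < |b s| then ‖x s‖ else 0 := by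
  rw [spectralTail_eq_indicator, indicator_apply]
  split_ifs <;> simp_all

variable [MeasurableSpace X] {μ : Measure X}

lemma MeasureTheory.AEStronglyMeasurable.spectralTail {b : X → ℝ} (hb : Measurable b) {x : X → E}
    (hx : AEStronglyMeasurable x μ) (r : ℝ) : AEStronglyMeasurable (spectralTail b x r) μ := by
  rw [spectralTail_eq_indicator]
  exact hx.indicator (measurableSet_lt measurable_const hb.abs)

lemma eLpNorm_const_mul_norm {p : ℝ≥0∞} {c : ℝ} (hc : 0 ≤ c) (f : X → E) :
    eLpNorm (fun s => c * ‖f s‖) p μ = ENNReal.ofReal c * eLpNorm f p μ := by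
  rw [show (fun s => c * ‖f s‖) = c • fun s => ‖f s‖ from rfl, eLpNorm_const_smul, eLpNorm_norm,
    Real.enorm_eq_ofReal hc]

lemma eLpNorm_le_add_sum_spectralTail {p : ℝ≥0∞} (hp : 1 ≤ p) {b : X → ℝ} (hb : Measurable b)
    {x : X → E} (hx : AEStronglyMeasurable x μ) {g : X → F} {w : ℝ → ℝ}
    (hw : MonotoneOn w (Ici 0)) (hw₀ : ∀ u, 0 ≤ u → 0 ≤ w u) {W : ℝ} (hW : 0 ≤ W)
    (hgw : ∀ s, ‖g s‖ ≤ w |b s| * ‖x s‖) (hgW : ∀ s, ‖g s‖ ≤ W * ‖x s‖)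
    {r : ℕ → ℝ} (hr : ∀ j, 0 ≤ r j) (L : ℕ) :
    eLpNorm g p μ ≤ ENNReal.ofReal (w (r 0)) * eLpNorm x p μ
      + ∑ j ∈ Finset.range L,
          ENNReal.ofReal (w (r (j + 1))) * eLpNorm (spectralTail b x (r j)) p μ
      + ENNReal.ofReal W * eLpNorm (spectralTail b x (r L)) p μ := by
  set T := fun j => spectralTail b x (r j)
  have hT : ∀ j, AEStronglyMeasurable (fun s => w (r (j + 1)) * ‖T j s‖) μ := fun j =>
    aestronglyMeasurable_const.mul (hx.spectralTail hb _).norm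
  have hpointwise : ∀ s, ‖g s‖ ≤ ((fun s => w (r 0) * ‖x s‖)
      + ∑ j ∈ Finset.range L, (fun s => w (r (j + 1)) * ‖T j s‖)
      + fun s => W * ‖T L s‖) s := by
    intro s
    have hxs := norm_nonneg (x s)
    have := le_add_sum_ite_add_ite_of_monotoneOn (w := fun u => w u * ‖x s‖)
      (fun u hu v hv huv => mul_le_mul_of_nonneg_right (hw hu hv huv) hxs)
      (fun u hu => mul_nonneg (hw₀ u hu) hxs) hr (abs_nonneg (b s))
      (hgw s) (hgW s) L
    simpa only [Pi.add_apply, Finset.sum_apply, T, norm_spectralTail, mul_ite, mul_zero,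
      ite_mul, zero_mul] using this
  calc eLpNorm g p μ ≤ eLpNorm (_ + _ + _) p μ := eLpNorm_mono_real hpointwise
    _ ≤ _ + _ + _ := by
        refine (eLpNorm_add_le ((aestronglyMeasurable_const.mul hx.norm).add
          (Finset.aestronglyMeasurable_sum _ fun j _ => hT j))
          (aestronglyMeasurable_const.mul (hx.spectralTail hb _).norm) hp).trans ?_
        gcongr
        refine (eLpNorm_add_le (aestronglyMeasurable_const.mul hx.norm)
          (Finset.aestronglyMeasurable_sum _ fun j _ => hT j) hp).trans ?_
        gcongr
        · exact (eLpNorm_const_mul_norm (hw₀ _ (hr 0)) x).le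
        · refine (eLpNorm_sum_le (fun j _ => hT j) hp).trans (Finset.sum_le_sum fun j _ => ?_)
          exact (eLpNorm_const_mul_norm (hw₀ _ (hr _)) _).le
        · exact (eLpNorm_const_mul_norm hW _).le

lemma eLpNorm_cexp_sub_one_pow_mul_le {p : ℝ≥0∞} (hp : 1 ≤ p) {b : X → ℝ} (hb : Measurable b)
    {x : X → ℂ} (hx : AEStronglyMeasurable x μ) {τ t : ℝ} (hτ : 0 ≤ τ) (hτt : τ ≤ t) (k : ℕ)
    {r : ℕ → ℝ} (hr : ∀ j, 0 ≤ r j) (L : ℕ) :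
    eLpNorm (fun s => (cexp (I * τ * b s) - 1) ^ k * x s) p μ
      ≤ ENNReal.ofReal ((t * r 0) ^ k) * eLpNorm x p μ
        + ∑ j ∈ Finset.range L,
            ENNReal.ofReal ((t * r (j + 1)) ^ k) * eLpNorm (spectralTail b x (r j)) p μ
        + ENNReal.ofReal (2 ^ k) * eLpNorm (spectralTail b x (r L)) p μ := by
  have ht : 0 ≤ t := hτ.trans hτt
  refine eLpNorm_le_add_sum_spectralTail hp hb hx (w := fun u => (t * u) ^ k)
    (fun u hu v _ huv => pow_le_pow_left₀ (mul_nonneg ht hu) (by gcongr) k)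
    (fun u hu => by positivity) (by positivity) (fun s => ?_) (fun s => ?_) hr L
  · rw [norm_mul]
    exact mul_le_mul_of_nonneg_right (norm_exp_I_mul_sub_one_pow_le_mul_abs hτ hτt _ _)
      (norm_nonneg _)
  · rw [norm_mul]
    exact mul_le_mul_of_nonneg_right (norm_exp_I_mul_sub_one_pow_le_two_pow _ _ _)
      (norm_nonneg _)

end

theorem inverse_consequence_k_gt_alpha_general {X : Type*} [MeasurableSpace X] (μ : Measure X)
    (b : X → ℝ) (hb : Measurable b)
    (x : X → ℂ) (hx : MemLp x 2 μ)
    (α : ℝ) (hα : 0 < α)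
    (hE : ∃ C : ℝ, ∃ R > (0 : ℝ), ∀ r ≥ R,
      eLpNorm (fun s => if |b s| ≤ r then 0 else x s) 2 μ ≤ ENNReal.ofReal (C * r ^ (-α)))
    (k : ℕ) (hkα : α < k) :
    ∃ C' : ℝ, ∃ δ > (0 : ℝ), ∀ t : ℝ, 0 < t → t ≤ δ →
      (⨆ τ ∈ Ioc (0 : ℝ) t,
          eLpNorm (fun s => (Complex.exp (Complex.I * τ * b s) - 1) ^ k * x s) 2 μ)
        ≤ ENNReal.ofReal (C' * t ^ α) := by
  obtain ⟨C, R, hR, hE⟩ := hE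
  set M := (eLpNorm x 2 μ).toReal
  have hM : eLpNorm x 2 μ = ENNReal.ofReal M := (ENNReal.ofReal_toReal hx.eLpNorm_ne_top).symm
  have hC : 0 ≤ max C 0 := le_max_right _ _
  have hTail : ∀ j : ℕ, eLpNorm (spectralTail b x (R * 2 ^ j)) 2 μ
      ≤ ENNReal.ofReal (max C 0 * (R * 2 ^ j) ^ (-α)) := fun j =>
    (hE _ (le_mul_of_one_le_right hR.le (one_le_pow₀ one_le_two))).trans <|
      ENNReal.ofReal_le_ofReal (mul_le_mul_of_nonneg_right (le_max_left _ _) (by positivity))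
  refine ⟨R ^ α * M + 2 ^ k * max C 0 / (2 ^ ((k : ℝ) - α) - 1) + 2 ^ k * 2 ^ α * max C 0,
    R⁻¹, inv_pos.2 hR, fun t ht htR => iSup₂_le fun τ hτ => ?_⟩
  obtain ⟨L, hL, hL'⟩ := exists_nat_pow_near (x := t⁻¹ / R)
    (by rwa [one_le_div hR, le_inv_comm₀ hR ht]) one_lt_two
  rw [le_div_iff₀' hR] at hL
  rw [div_lt_iff₀' hR] at hL'
  calc _ ≤ ENNReal.ofReal ((t * (R * 2 ^ 0)) ^ k) * eLpNorm x 2 μ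
        + ∑ j ∈ Finset.range L, ENNReal.ofReal ((t * (R * 2 ^ (j + 1))) ^ k)
            * eLpNorm (spectralTail b x (R * 2 ^ j)) 2 μ
        + ENNReal.ofReal (2 ^ k) * eLpNorm (spectralTail b x (R * 2 ^ L)) 2 μ :=
        eLpNorm_cexp_sub_one_pow_mul_le one_le_two hb hx.1 hτ.1.le hτ.2 k
          (r := fun j => R * 2 ^ j) (fun j => by positivity) L
    _ ≤ ENNReal.ofReal ((t * (R * 2 ^ 0)) ^ k * M
          + ∑ j ∈ Finset.range L, (t * (R * 2 ^ (j + 1))) ^ k * (max C 0 * (R * 2 ^ j) ^ (-α))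
          + 2 ^ k * (max C 0 * (R * 2 ^ L) ^ (-α))) := by
        rw [ENNReal.ofReal_add (by positivity) (by positivity), ENNReal.ofReal_add (by positivity)
          (Finset.sum_nonneg fun j _ => by positivity), ENNReal.ofReal_sum_of_nonneg
          fun j _ => by positivity, hM]
        gcongr with j
        all_goals rw [ENNReal.ofReal_mul (by positivity)]
        exacts [by gcongr; exact hTail j, by gcongr; exact hTail L]
    _ ≤ _ := ENNReal.ofReal_le_ofReal
        (dyadic_bound_le hα hkα hC ENNReal.toReal_nonneg ht hR hL hL')

/-- Consequence of the inverse theorem for `ω(t) = t^α` (case `k > α`).  `B` is realized as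
multiplication by the measurable function `b` on `L²(μ)`.  If the best approximation
satisfies `E_r(x,B) = O(r^{-α})` as `r → ∞`, then for `k > α` one has
`ω_k(t,x,B) = O(t^α)` as `t → 0⁺`. -/
theorem inverse_consequence_k_gt_alpha {X : Type*} [MeasurableSpace X] (μ : Measure X)
    (b : X → ℝ) (hb : Measurable b)
    (x : X → ℂ) (hx : MemLp x 2 μ)
    (α : ℝ) (hα : 0 < α)
    (hE : ∃ C : ℝ, ∃ R > (0 : ℝ), ∀ r ≥ R,
      eLpNorm (fun s => if |b s| ≤ r then 0 else x s) 2 μ ≤ ENNReal.ofReal (C * r ^ (-α)))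
    (k : ℕ) (hk : 1 ≤ k) (hkα : α < k) :
    ∃ C' : ℝ, ∃ δ > (0 : ℝ), ∀ t : ℝ, 0 < t → t ≤ δ →
      (⨆ τ ∈ Ioc (0 : ℝ) t,
          eLpNorm (fun s => (Complex.exp (Complex.I * τ * b s) - 1) ^ k * x s) 2 μ)
        ≤ ENNReal.ofReal (C' * t ^ α) :=
  inverse_consequence_k_gt_alpha_general μ b hb x hx α hα hE k hkα
end

section
/- Let B be a self-adjoint operator with spectral measure E on a Hilbert space H, and x ∈ H. If E_r(x,B) = O(r^{-α}) as r → ∞ for some α > 0, then for every positive integer k < α, ω_k(t, x, B) = O(t^k) as t → 0⁺. -/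
/-!
On the dyadic shell `2 ^ j * R < |b| ≤ 2 ^ (j + 1) * R` the weight `|b| ^ k` is at most
`(2 ^ (j + 1) * R) ^ k`, while the `L²` mass of `x` there is bounded by the tail
`E_{2 ^ j R} = O(2 ^ (-j α))`. Since `k < α` these contributions decay geometrically, so
`|b| ^ k * x ∈ L²`. Then `|exp (i τ b) - 1| ^ k ≤ τ ^ k |b| ^ k` gives
`ω_k(t) ≤ t ^ k ‖|b| ^ k x‖`.
-/

open MeasureTheory Set
open scoped ENNReal

theorem exists_dyadic_shell {R u : ℝ} (hR : 0 < R) (hu : R < u) :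
    ∃ j : ℕ, 2 ^ j * R < u ∧ u ≤ 2 ^ (j + 1) * R := by
  have hex : ∃ m : ℕ, u ≤ 2 ^ m * R := by
    obtain ⟨n, hn⟩ := pow_unbounded_of_one_lt (u / R) one_lt_two
    exact ⟨n, ((div_lt_iff₀ hR).1 hn).le⟩
  obtain ⟨j, hj⟩ := Nat.exists_eq_succ_of_ne_zero <| show Nat.find hex ≠ 0 by
    intro h
    simpa [h, hu.not_ge] using Nat.find_spec hex
  refine ⟨j, lt_of_not_ge (Nat.find_min hex (by omega)), ?_⟩
  simpa [hj] using Nat.find_spec hex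

theorem Real.two_pow_mul_rpow (j : ℕ) {a : ℝ} (ha : 0 ≤ a) (β : ℝ) :
    (2 ^ j * a) ^ β = (2 ^ β) ^ j * a ^ β := by
  rw [Real.mul_rpow (by positivity) ha, Real.rpow_pow_comm zero_le_two]

section Moments

variable {X : Type*} [MeasurableSpace X] {μ : Measure X} {b : X → ℝ}

theorem setLIntegral_abs_rpow_mul_le {β : ℝ} (hβ : 0 ≤ β) {S : Set X} (hS : MeasurableSet S)
    {c : ℝ} (hbc : ∀ s ∈ S, |b s| ≤ c) (f : X → ℝ≥0∞) :
    ∫⁻ s in S, ENNReal.ofReal (|b s| ^ β) * f s ∂μ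
      ≤ ENNReal.ofReal (c ^ β) * ∫⁻ s in S, f s ∂μ := by
  rw [← lintegral_const_mul' _ _ ENNReal.ofReal_ne_top]
  refine setLIntegral_mono' hS fun s hs => ?_
  gcongr
  exact hbc s hs

theorem lintegral_abs_rpow_mul_lt_top_of_tail_le (hb : Measurable b) {f : X → ℝ≥0∞}
    (hf : ∫⁻ s, f s ∂μ ≠ ∞) {β γ C R : ℝ} (hβ : 0 ≤ β) (hβγ : β < γ) (hR : 0 < R)
    (htail : ∀ r ≥ R, ∫⁻ s in {s | r < |b s|}, f s ∂μ ≤ ENNReal.ofReal (C * r ^ (-γ))) :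
    ∫⁻ s, ENNReal.ofReal (|b s| ^ β) * f s ∂μ < ∞ := by
  set S : ℕ → Set X := fun j => {s | 2 ^ j * R < |b s|} ∩ {s | |b s| ≤ 2 ^ (j + 1) * R}
  have hA : MeasurableSet {s | |b s| ≤ R} := measurableSet_le hb.abs measurable_const
  have hS (j : ℕ) : MeasurableSet (S j) :=
    (measurableSet_lt measurable_const hb.abs).inter (measurableSet_le hb.abs measurable_const)
  have hcover : {s | |b s| ≤ R}ᶜ ⊆ ⋃ j, S j := fun s hs =>
    mem_iUnion.2 (exists_dyadic_shell hR (not_le.1 hs))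
  have hshell (j : ℕ) : ∫⁻ s in S j, ENNReal.ofReal (|b s| ^ β) * f s ∂μ
      ≤ ENNReal.ofReal (C * (2 * R) ^ β * R ^ (-γ)) * ENNReal.ofReal (2 ^ (β - γ)) ^ j := by
    calc _ ≤ ENNReal.ofReal ((2 ^ (j + 1) * R) ^ β) * ∫⁻ s in S j, f s ∂μ :=
          setLIntegral_abs_rpow_mul_le hβ (hS j) (fun s hs => hs.2) f
      _ ≤ ENNReal.ofReal ((2 ^ (j + 1) * R) ^ β) * ENNReal.ofReal (C * (2 ^ j * R) ^ (-γ)) := by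
          gcongr
          exact (lintegral_mono_set inter_subset_left).trans
            (htail _ (le_mul_of_one_le_left hR.le (one_le_pow₀ one_le_two)))
      _ = _ := by
          rw [← ENNReal.ofReal_mul (by positivity), ← ENNReal.ofReal_pow (by positivity),
            ← ENNReal.ofReal_mul' (by positivity), pow_succ, mul_assoc,
            Real.two_pow_mul_rpow _ (by positivity), Real.two_pow_mul_rpow _ hR.le,
            Real.rpow_sub two_pos, div_eq_mul_inv, ← Real.rpow_neg zero_le_two, mul_pow]
          ring_nf
  have hratio : ENNReal.ofReal (2 ^ (β - γ)) < 1 :=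
    ENNReal.ofReal_lt_one.2 (Real.rpow_lt_one_of_one_lt_of_neg one_lt_two (by linarith))
  rw [← lintegral_add_compl _ hA]
  refine ENNReal.add_lt_top.2 ⟨?_, ?_⟩
  · calc _ ≤ ENNReal.ofReal (R ^ β) * ∫⁻ s in {s | |b s| ≤ R}, f s ∂μ :=
          setLIntegral_abs_rpow_mul_le hβ hA (fun s hs => hs) f
      _ ≤ ENNReal.ofReal (R ^ β) * ∫⁻ s, f s ∂μ := by gcongr; exact Measure.restrict_le_self
      _ < ∞ := ENNReal.mul_lt_top ENNReal.ofReal_lt_top hf.lt_top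
  · calc _ ≤ ∫⁻ s in ⋃ j, S j, ENNReal.ofReal (|b s| ^ β) * f s ∂μ := lintegral_mono_set hcover
      _ ≤ ∑' j, ∫⁻ s in S j, ENNReal.ofReal (|b s| ^ β) * f s ∂μ := lintegral_iUnion_le _ _
      _ ≤ ∑' j, ENNReal.ofReal (C * (2 * R) ^ β * R ^ (-γ)) * ENNReal.ofReal (2 ^ (β - γ)) ^ j :=
          ENNReal.tsum_le_tsum hshell
      _ < ∞ := by
          rw [ENNReal.tsum_mul_left, ENNReal.tsum_geometric]
          exact ENNReal.mul_lt_top ENNReal.ofReal_lt_top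
            (ENNReal.inv_lt_top.2 (tsub_pos_of_lt hratio))

end Moments

section Lp

variable {X : Type*} [MeasurableSpace X] {μ : Measure X} {b : X → ℝ}
  {E : Type*} [NormedAddCommGroup E] {p : ℝ≥0∞}

theorem setLIntegral_enorm_rpow_eq_eLpNorm_indicator_rpow (hp0 : p ≠ 0) (hp : p ≠ ∞) {S : Set X}
    (hS : MeasurableSet S) (x : X → E) :
    ∫⁻ s in S, ‖x s‖ₑ ^ p.toReal ∂μ = eLpNorm (S.indicator x) p μ ^ p.toReal := by
  rw [eLpNorm_indicator_eq_eLpNorm_restrict hS, eLpNorm_eq_eLpNorm' hp0 hp,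
    lintegral_rpow_enorm_eq_rpow_eLpNorm' (ENNReal.toReal_pos hp0 hp)]

theorem eLpNorm_abs_rpow_mul_norm_lt_top_of_tail_le (hb : Measurable b) (hp0 : p ≠ 0)
    (hp : p ≠ ∞) {x : X → E} (hx : eLpNorm x p μ < ∞) {α C R : ℝ} (hR : 0 < R)
    (htail : ∀ r ≥ R,
      eLpNorm ({s | r < |b s|}.indicator x) p μ ≤ ENNReal.ofReal (C * r ^ (-α)))
    {κ : ℝ} (hκ : 0 ≤ κ) (hκα : κ < α) :
    eLpNorm (fun s => |b s| ^ κ * ‖x s‖) p μ < ∞ := by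
  have hq : 0 < p.toReal := ENNReal.toReal_pos hp0 hp
  rw [eLpNorm_lt_top_iff_lintegral_rpow_enorm_lt_top hp0 hp]
  have hweight (s : X) : ‖|b s| ^ κ * ‖x s‖‖ₑ ^ p.toReal
      = ENNReal.ofReal (|b s| ^ (κ * p.toReal)) * ‖x s‖ₑ ^ p.toReal := by
    rw [Real.enorm_eq_ofReal (by positivity), ENNReal.ofReal_mul (by positivity), ofReal_norm,
      ENNReal.mul_rpow_of_nonneg _ _ hq.le, ENNReal.ofReal_rpow_of_nonneg (by positivity) hq.le,
      ← Real.rpow_mul (abs_nonneg _)]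
  simp_rw [hweight]
  refine lintegral_abs_rpow_mul_lt_top_of_tail_le hb
    (lintegral_rpow_enorm_lt_top_of_eLpNorm_lt_top hp0 hp hx).ne (by positivity)
    (mul_lt_mul_of_pos_right hκα hq) hR (C := max C 0 ^ p.toReal) fun r hr => ?_
  have hr0 : 0 ≤ r := hR.le.trans hr
  calc _ = eLpNorm ({s | r < |b s|}.indicator x) p μ ^ p.toReal :=
        setLIntegral_enorm_rpow_eq_eLpNorm_indicator_rpow hp0 hp
          (measurableSet_lt measurable_const hb.abs) x
    _ ≤ ENNReal.ofReal (max C 0 * r ^ (-α)) ^ p.toReal := by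
        gcongr
        exact (htail r hr).trans (by gcongr; exact le_max_left _ _)
    _ = _ := by
        rw [ENNReal.ofReal_rpow_of_nonneg (by positivity) hq.le,
          Real.mul_rpow (by positivity) (by positivity), ← Real.rpow_mul hr0, neg_mul]

end Lp

theorem eLpNorm_exp_I_mul_sub_one_pow_mul_le {X : Type*} [MeasurableSpace X] (μ : Measure X)
    (p : ℝ≥0∞) (b : X → ℝ) (x : X → ℂ) (τ : ℝ) (k : ℕ) :
    eLpNorm (fun s => (Complex.exp (Complex.I * τ * b s) - 1) ^ k * x s) p μ
      ≤ ENNReal.ofReal (|τ| ^ k) * eLpNorm (fun s => |b s| ^ k * ‖x s‖) p μ := by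
  rw [← Real.enorm_eq_ofReal (by positivity), ← eLpNorm_const_smul]
  refine eLpNorm_mono_real fun s => ?_
  have hexp : ‖Complex.exp (Complex.I * τ * b s) - 1‖ ≤ |τ * b s| := by
    simpa [mul_assoc] using Real.norm_exp_I_mul_ofReal_sub_one_le (x := τ * b s)
  calc _ = ‖Complex.exp (Complex.I * τ * b s) - 1‖ ^ k * ‖x s‖ := by rw [norm_mul, norm_pow]
    _ ≤ |τ * b s| ^ k * ‖x s‖ := by gcongr
    _ = _ := by simp only [Pi.smul_apply, smul_eq_mul, abs_mul, mul_pow, mul_assoc]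

theorem inverse_consequence_k_lt_alpha_general {X : Type*} [MeasurableSpace X] (μ : Measure X)
    (b : X → ℝ) (hb : Measurable b)
    (x : X → ℂ) (hx : MemLp x 2 μ)
    (α : ℝ)
    (hE : ∃ C : ℝ, ∃ R > (0 : ℝ), ∀ r ≥ R,
      eLpNorm (fun s => if |b s| ≤ r then 0 else x s) 2 μ ≤ ENNReal.ofReal (C * r ^ (-α)))
    (k : ℕ) (hkα : (k : ℝ) < α) :
    ∃ C' : ℝ, ∃ δ > (0 : ℝ), ∀ t : ℝ, 0 < t → t ≤ δ →
      (⨆ τ ∈ Ioc (0 : ℝ) t,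
          eLpNorm (fun s => (Complex.exp (Complex.I * τ * b s) - 1) ^ k * x s) 2 μ)
        ≤ ENNReal.ofReal (C' * t ^ k) := by
  obtain ⟨C, R, hR, hC⟩ := hE
  have htail (r : ℝ) (hr : r ≥ R) :
      eLpNorm ({s | r < |b s|}.indicator x) 2 μ ≤ ENNReal.ofReal (C * r ^ (-α)) := by
    convert hC r hr using 3 with s
    by_cases h : |b s| ≤ r <;> simp [h]
  set M := eLpNorm (fun s => |b s| ^ k * ‖x s‖) 2 μ
  have hM : M < ∞ := by
    simpa only [Real.rpow_natCast] using eLpNorm_abs_rpow_mul_norm_lt_top_of_tail_le hb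
      two_ne_zero ENNReal.ofNat_ne_top hx.2 hR htail (Nat.cast_nonneg k) hkα
  refine ⟨M.toReal, 1, one_pos, fun t ht _ => iSup₂_le fun τ hτ => ?_⟩
  calc _ ≤ ENNReal.ofReal (|τ| ^ k) * M := eLpNorm_exp_I_mul_sub_one_pow_mul_le μ 2 b x τ k
    _ ≤ ENNReal.ofReal (t ^ k) * ENNReal.ofReal M.toReal := by
        rw [ENNReal.ofReal_toReal hM.ne, abs_of_pos hτ.1]
        gcongr
        · exact hτ.1.le
        · exact hτ.2
    _ = _ := by rw [← ENNReal.ofReal_mul (by positivity), mul_comm]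

/-- Consequence of the inverse theorem for `ω(t) = t^α` (case `k < α`).  `B` is realized as
multiplication by the measurable function `b` on `L²(μ)`.  If the best approximation
satisfies `E_r(x,B) = O(r^{-α})` as `r → ∞`, then for every positive integer `k < α` one has
`ω_k(t,x,B) = O(t^k)` as `t → 0⁺`. -/
theorem inverse_consequence_k_lt_alpha {X : Type*} [MeasurableSpace X] (μ : Measure X)
    (b : X → ℝ) (hb : Measurable b)
    (x : X → ℂ) (hx : MemLp x 2 μ)
    (α : ℝ) (hα : 0 < α)
    (hE : ∃ C : ℝ, ∃ R > (0 : ℝ), ∀ r ≥ R,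
      eLpNorm (fun s => if |b s| ≤ r then 0 else x s) 2 μ ≤ ENNReal.ofReal (C * r ^ (-α)))
    (k : ℕ) (hk : 1 ≤ k) (hkα : (k : ℝ) < α) :
    ∃ C' : ℝ, ∃ δ > (0 : ℝ), ∀ t : ℝ, 0 < t → t ≤ δ →
      (⨆ τ ∈ Ioc (0 : ℝ) t,
          eLpNorm (fun s => (Complex.exp (Complex.I * τ * b s) - 1) ^ k * x s) 2 μ)
        ≤ ENNReal.ofReal (C' * t ^ k) :=
  inverse_consequence_k_lt_alpha_general μ b hb x hx α hE k hkα
end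

section
/- In ℓ²: let α > 1 and define x = (x_k)_{k≥2} with x_k = 1/(k^{2α + 1/2} (ln k)^{1/2}). Then Σ_{k≥2} k^{4α} x_k² = ∞ (so x ∉ D(B^α) for B the diagonal operator with eigenvalues k²), but n^{2α-1} · (Σ_{k>n} k² x_k²)^{1/2} → 0 as n → ∞. -/
open Filter Real

/-!
Squaring the sequence turns both claims into statements about `k ^ p / log k`.
First, `k ^ (4α) x_k² = 1 / (k log k)`, whose series diverges by Cauchy condensation: the
condensed series is the harmonic series divided by `log 2`.
Second, for `k > n ≥ 2` we have `k² x_k² = k ^ (3 - 4α) / log k · k⁻² ≤ n ^ (3 - 4α) / log n · k⁻²`,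
and `∑_{k > n} k⁻² ≤ 2 / (n + 1)`, so `n ^ (4α - 2) ∑_{k > n} k² x_k² ≤ 2 / log n → 0`.
-/

theorem Real.not_summable_inv_natCast_mul_log :
    ¬ Summable (fun k : ℕ => ((k : ℝ) * log k)⁻¹) := by
  have h_nonneg : 0 ≤ᶠ[atTop] fun k : ℕ => ((k : ℝ) * log k)⁻¹ :=
    .of_forall fun k => inv_nonneg.2 (mul_nonneg k.cast_nonneg (log_natCast_nonneg k))
  have h_anti : ∀ᶠ k : ℕ in atTop, ((↑(k + 1) : ℝ) * log ↑(k + 1))⁻¹ ≤ ((k : ℝ) * log k)⁻¹ := by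
    filter_upwards [eventually_ge_atTop 2] with k hk
    have hk' : (2 : ℝ) ≤ k := by exact_mod_cast hk
    have hle : (k : ℝ) ≤ ↑(k + 1) := by push_cast; linarith
    exact inv_anti₀ (mul_pos (by linarith) (log_pos (by linarith)))
      (mul_le_mul hle (log_le_log (by linarith) hle) (log_nonneg (by linarith)) (by positivity))
  have h_condensed : (fun k : ℕ => (2 : ℝ) ^ k * (((2 ^ k : ℕ) : ℝ) * log ((2 ^ k : ℕ) : ℝ))⁻¹)
      = fun k : ℕ => (log 2)⁻¹ * (k : ℝ)⁻¹ := by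
    ext k
    push_cast
    rw [log_pow, mul_inv, mul_inv, ← mul_assoc, mul_inv_cancel₀ (by positivity), one_mul,
      mul_comm]
  rw [← summable_condensed_iff_of_eventually_nonneg h_nonneg h_anti, h_condensed,
    summable_mul_left_iff (inv_ne_zero (log_pos one_lt_two).ne')]
  exact Real.not_summable_natCast_inv

theorem Real.rpow_div_log_le_rpow_div_log {p x y : ℝ} (hp : p ≤ 0) (hx : 1 < x) (hxy : x ≤ y) :
    y ^ p / log y ≤ x ^ p / log x :=
  div_le_div₀ (rpow_nonneg (by linarith) p) (rpow_le_rpow_of_nonpos (by linarith) hxy hp)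
    (log_pos hx) (log_le_log (by linarith) hxy)

noncomputable def ritzSeq (α : ℝ) (k : ℕ) : ℝ :=
  if 2 ≤ k then (k : ℝ) ^ (-(2 * α + 1 / 2)) * log k ^ (-(1 / 2) : ℝ) else 0

theorem ritzSeq_sq (α : ℝ) {k : ℕ} (hk : 2 ≤ k) :
    ritzSeq α k ^ 2 = (k : ℝ) ^ (-(4 * α + 1)) / log k := by
  have hk' : (1 : ℝ) < k := by exact_mod_cast hk
  rw [ritzSeq, if_pos hk, mul_pow, ← rpow_mul_natCast (by linarith),
    ← rpow_mul_natCast (log_pos hk').le, show -(2 * α + 1 / 2) * ((2 : ℕ) : ℝ) = -(4 * α + 1) by push_cast; ring,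
    show -(1 / 2 : ℝ) * ((2 : ℕ) : ℝ) = -1 by norm_num, rpow_neg_one, div_eq_mul_inv]

-- For `k < 2` both sides vanish: `ritzSeq` is `0` there and `log 1 = 0`.
theorem natCast_rpow_mul_ritzSeq_sq (α : ℝ) (k : ℕ) :
    (k : ℝ) ^ (4 * α) * ritzSeq α k ^ 2 = ((k : ℝ) * log k)⁻¹ := by
  rcases lt_or_ge k 2 with hk | hk
  · interval_cases k <;> simp [ritzSeq]
  · have hk0 : (0 : ℝ) < k := by positivity
    rw [ritzSeq_sq α hk, mul_div_assoc', ← rpow_add hk0, show 4 * α + -(4 * α + 1) = -1 by ring,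
      rpow_neg_one, mul_inv, div_eq_mul_inv]

theorem natCast_sq_mul_ritzSeq_sq_le {α : ℝ} (hα : 3 / 4 ≤ α) {n k : ℕ} (hn : 2 ≤ n)
    (hnk : n < k) :
    (k : ℝ) ^ 2 * ritzSeq α k ^ 2 ≤ (n : ℝ) ^ (3 - 4 * α) / log n * ((k : ℝ) ^ 2)⁻¹ := by
  have hn' : (1 : ℝ) < n := by exact_mod_cast hn
  have hnk' : (n : ℝ) ≤ k := by exact_mod_cast hnk.le
  have hk0 : (k : ℝ) ≠ 0 := Nat.cast_ne_zero.2 (by omega)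
  have hshift : (k : ℝ) ^ (3 - 4 * α) = (k : ℝ) ^ 2 * (k : ℝ) ^ (-(4 * α + 1)) * (k : ℝ) ^ 2 := by
    rw [mul_comm ((k : ℝ) ^ 2), ← rpow_add_natCast hk0, ← rpow_add_natCast hk0]
    ring_nf
  calc (k : ℝ) ^ 2 * ritzSeq α k ^ 2 = (k : ℝ) ^ (3 - 4 * α) / log k * ((k : ℝ) ^ 2)⁻¹ := by
        rw [ritzSeq_sq α (hn.trans hnk.le), hshift]
        field_simp
    _ ≤ (n : ℝ) ^ (3 - 4 * α) / log n * ((k : ℝ) ^ 2)⁻¹ :=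
        mul_le_mul_of_nonneg_right
          (rpow_div_log_le_rpow_div_log (by linarith) hn' hnk') (by positivity)

noncomputable def ritzTail (α : ℝ) (n : ℕ) : ℝ :=
  ∑' k : ℕ, if k ≤ n then 0 else (k : ℝ) ^ 2 * ritzSeq α k ^ 2

theorem sum_ite_inv_sq_le (n : ℕ) (s : Finset ℕ) :
    ∑ k ∈ s, (if k ≤ n then 0 else ((k : ℝ) ^ 2)⁻¹) ≤ 2 / (n + 1) := by
  set N := s.sup id + 1
  have hsN : s ⊆ Finset.range N := fun k hk =>
    Finset.mem_range.2 (Nat.lt_succ_of_le (Finset.le_sup (f := id) hk))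
  calc ∑ k ∈ s, (if k ≤ n then 0 else ((k : ℝ) ^ 2)⁻¹)
      ≤ ∑ k ∈ Finset.range N, (if k ≤ n then 0 else ((k : ℝ) ^ 2)⁻¹) :=
        Finset.sum_le_sum_of_subset_of_nonneg hsN fun k _ _ => by positivity
    _ = ∑ k ∈ Finset.Ioo n N, ((k : ℝ) ^ 2)⁻¹ := by
        rw [Finset.sum_ite, Finset.sum_const_zero, zero_add]
        congr 1
        ext k
        simp only [Finset.mem_filter, Finset.mem_range, Finset.mem_Ioo]
        omega
    _ ≤ 2 / (n + 1) := sum_Ioo_inv_sq_le n N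

theorem ritzTail_le {α : ℝ} (hα : 3 / 4 ≤ α) {n : ℕ} (hn : 2 ≤ n) :
    ritzTail α n ≤ (n : ℝ) ^ (3 - 4 * α) / log n * (2 / (n + 1)) := by
  have hC : 0 ≤ (n : ℝ) ^ (3 - 4 * α) / log n :=
    div_nonneg (rpow_nonneg n.cast_nonneg _) (log_natCast_nonneg n)
  refine tsum_le_of_sum_le' (by positivity) fun s => ?_
  calc ∑ k ∈ s, (if k ≤ n then 0 else (k : ℝ) ^ 2 * ritzSeq α k ^ 2)
      ≤ ∑ k ∈ s, (n : ℝ) ^ (3 - 4 * α) / log n * (if k ≤ n then 0 else ((k : ℝ) ^ 2)⁻¹) := by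
        refine Finset.sum_le_sum fun k _ => ?_
        split_ifs with hk
        · simp
        · exact natCast_sq_mul_ritzSeq_sq_le hα hn (not_le.1 hk)
    _ = (n : ℝ) ^ (3 - 4 * α) / log n * ∑ k ∈ s, (if k ≤ n then 0 else ((k : ℝ) ^ 2)⁻¹) :=
        (Finset.mul_sum ..).symm
    _ ≤ (n : ℝ) ^ (3 - 4 * α) / log n * (2 / (n + 1)) :=
        mul_le_mul_of_nonneg_left (sum_ite_inv_sq_le n s) hC

theorem rpow_mul_sqrt_ritzTail_le {α : ℝ} (hα : 3 / 4 ≤ α) {n : ℕ} (hn : 2 ≤ n) :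
    (n : ℝ) ^ (2 * α - 1) * √(ritzTail α n) ≤ √(2 / log n) := by
  have hn0 : (0 : ℝ) < n := by positivity
  rw [← sqrt_sq (rpow_nonneg hn0.le _), ← sqrt_mul (sq_nonneg _), ← rpow_mul_natCast hn0.le]
  refine sqrt_le_sqrt ?_
  calc (n : ℝ) ^ ((2 * α - 1) * (2 : ℕ)) * ritzTail α n
      ≤ (n : ℝ) ^ ((2 * α - 1) * (2 : ℕ)) * ((n : ℝ) ^ (3 - 4 * α) / log n * (2 / (n + 1))) :=
        mul_le_mul_of_nonneg_left (ritzTail_le hα hn) (by positivity)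
    _ = 2 / log n * (n / (n + 1)) := by
        have hexp : (n : ℝ) ^ ((2 * α - 1) * (2 : ℕ)) * (n : ℝ) ^ (3 - 4 * α) = n := by
          rw [← rpow_add hn0, Nat.cast_two, show (2 * α - 1) * 2 + (3 - 4 * α) = 1 by ring,
            rpow_one]
        linear_combination (2 / log n / (n + 1)) * hexp
    _ ≤ 2 / log n :=
        mul_le_of_le_one_right (by positivity) ((div_le_one (by positivity)).2 (by linarith))

/-- The counterexample: for `α > 1` let `x_k = k^{-(2α+1/2)}·(ln k)^{-1/2}` for `k ≥ 2`
(and `x_k = 0` otherwise).  Then `Σ_k k^{4α} x_k² = ∞` (so the corresponding vector does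
not belong to `D(B^α)` for the diagonal operator `B` with eigenvalues `k²`), yet
`n^{2α-1}·(Σ_{k>n} k² x_k²)^{1/2} → 0` as `n → ∞`. -/
theorem ritz_counterexample (α : ℝ) (hα : 1 < α) :
    (¬ Summable (fun k : ℕ =>
        (k : ℝ) ^ (4 * α) *
          (if 2 ≤ k then (k : ℝ) ^ (-(2 * α + 1 / 2)) * (Real.log k) ^ (-(1 / 2) : ℝ)
            else 0) ^ 2)) ∧
      Tendsto (fun n : ℕ =>
          (n : ℝ) ^ (2 * α - 1) *
            Real.sqrt (∑' k : ℕ, if k ≤ n then 0 else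
              (k : ℝ) ^ 2 *
                (if 2 ≤ k then (k : ℝ) ^ (-(2 * α + 1 / 2)) * (Real.log k) ^ (-(1 / 2) : ℝ)
                  else 0) ^ 2))
        atTop (nhds 0) := by
  refine ⟨?_, ?_⟩
  · change ¬ Summable fun k : ℕ => (k : ℝ) ^ (4 * α) * ritzSeq α k ^ 2
    rw [funext (natCast_rpow_mul_ritzSeq_sq α)]
    exact not_summable_inv_natCast_mul_log
  · have hbound : Tendsto (fun n : ℕ => √(2 / log n)) atTop (nhds 0) := by
      have := (tendsto_log_atTop.comp tendsto_natCast_atTop_atTop).const_div_atTop (2 : ℝ)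
      simpa only [sqrt_zero, Function.comp_def] using (continuous_sqrt.tendsto 0).comp this
    refine squeeze_zero' (.of_forall fun n => by positivity) ?_ hbound
    filter_upwards [eventually_ge_atTop 2] with n hn
    exact rpow_mul_sqrt_ritzTail_le (by linarith) hn
end
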